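/- Let B be a betweenness structure of order n and co-size m, and set c=n−m. Then every point x of B satisfies d_B(x)=n−c or d_B(x)≤5−c (i.e., every point either lies in all m triangles or lies in at most m−n+5 of them). -/
import Mathlib


open scoped ENNReal

namespace FMS

/-- An (ordered) triple is collinear if one of its points lies between the other two. -/
def CollinearTriple {X : Type*} (btw : X → X → X → Prop) (x y z : X) : Prop :=
  btw x y z ∨ btw y x z ∨ btw x z y

/-- A finite set of points is collinear if it can be enumerated as a collinear triple. -/
def CollinearSet {X : Type*} (btw : X → X → X → Prop) (T : Finset X) : Prop :=
  ∃ x y z : X, (T : Set X) = {x, y, z} ∧ CollinearTriple btw x y z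

/-- A triangle is a 3-element subset of the ground set that is not collinear. -/
def IsTriangle {X : Type*} (btw : X → X → X → Prop) (T : Finset X) : Prop :=
  T.card = 3 ∧ ¬ CollinearSet btw T

/-- The co-size of a betweenness structure: the number of triangles. -/
noncomputable def coSize {X : Type*} (btw : X → X → X → Prop) : ℕ :=
  Set.ncard {T : Finset X | IsTriangle btw T}

/-- The degree of a point: the number of triangles containing it. -/
noncomputable def degB {X : Type*} (btw : X → X → X → Prop) (x : X) : ℕ :=
  Set.ncard {T : Finset X | IsTriangle btw T ∧ x ∈ T}

/-- A betweenness structure is linear if every 3-element subset is collinear. -/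
def Linear {X : Type*} (btw : X → X → X → Prop) : Prop :=
  ∀ T : Finset X, T.card = 3 → CollinearSet btw T

/-- The axioms (P1)-(P4) of (almost-metrizable) betweenness structures. -/
def IsBtw {X : Type*} (btw : X → X → X → Prop) : Prop :=
  (∀ x z : X, btw x x z) ∧
  (∀ x y z : X, btw x y z → btw z y x) ∧
  (∀ x y z : X, btw x y z → btw y x z → x = y) ∧
  (∀ x y z w : X, btw x y z → btw x w y → btw x w z ∧ btw w y z)

/-- Isomorphism of betweenness structures. -/
def BIso {X Y : Type*} (btwX : X → X → X → Prop) (btwY : Y → Y → Y → Prop) : Prop :=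
  ∃ e : X ≃ Y, ∀ x y z : X, btwX x y z ↔ btwY (e x) (e y) (e z)

/-- The cost (length) of a walk, given edge weights `w` (non-edges have weight `⊤`). -/
noncomputable def walkCost {X : Type*} (w : X → X → ℝ≥0∞) : List X → ℝ≥0∞
  | [] => 0
  | [_] => 0
  | a :: b :: l => w a b + walkCost w (b :: l)

/-- Shortest-path distance for the weighted graph with weight function `w`. -/
noncomputable def spDist {X : Type*} (w : X → X → ℝ≥0∞) (x y : X) : ℝ≥0∞ :=
  ⨅ l ∈ {l : List X | l.head? = some x ∧ l.getLast? = some y}, walkCost w l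

/-- The betweenness structure induced by the weighted graph with weight function `w`:
`y` is between `x` and `z` iff `d(x,y) + d(y,z) = d(x,z)` for the shortest-path metric. -/
def metricBtw {X : Type*} (w : X → X → ℝ≥0∞) (x y z : X) : Prop :=
  spDist w x y + spDist w y z = spDist w x z

/-- The ordered betweenness structure `𝒫ₙ` induced by the path `Pₙ`. -/
def pathBtw (n : ℕ) : Fin n → Fin n → Fin n → Prop := fun i j k =>
  (i ≤ j ∧ j ≤ k) ∨ (k ≤ j ∧ j ≤ i)

/-- Unit edge weights of the 4-cycle `C₄`. -/
noncomputable def wC4 : Fin 4 → Fin 4 → ℝ≥0∞ := fun i j =>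
  if (j : ℕ) = ((i : ℕ) + 1) % 4 ∨ (i : ℕ) = ((j : ℕ) + 1) % 4 then 1 else ⊤

/-- Unit edge weights of the complete graph `K₃`. -/
noncomputable def wK3 : Fin 3 → Fin 3 → ℝ≥0∞ := fun i j => if i ≠ j then 1 else ⊤

/-- A betweenness structure is regular if no 4-element subset induces a substructure
isomorphic to `𝒞₄` (no cyclic line). -/
def Regular {X : Type*} (btw : X → X → X → Prop) : Prop :=
  ∀ Y : Set X, ¬ BIso (fun a b c : Y => btw a.1 b.1 c.1) (metricBtw wC4)

/-- A betweenness structure is orderable if it has an ordered extension: there is an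
ordering (injective labeling by naturals) of the points such that every betweenness
relation is compatible with it. -/
def Orderable {X : Type*} (btw : X → X → X → Prop) : Prop :=
  ∃ f : X → ℕ, Function.Injective f ∧
    ∀ x y z : X, btw x y z → (f x ≤ f y ∧ f y ≤ f z) ∨ (f z ≤ f y ∧ f y ≤ f x)

/-- The triangle hypergraph is a Δ-star: at most one edge, or all pairs of distinct
triangles meet in the same kernel `K`. -/
def DeltaStar {X : Type*} (btw : X → X → X → Prop) : Prop :=
  {T : Finset X | IsTriangle btw T}.Subsingleton ∨
  ∃ K : Set X, ∀ E F : Finset X, IsTriangle btw E → IsTriangle btw F → E ≠ F →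
    (E : Set X) ∩ (F : Set X) = K

/-- The triangle hypergraph is a tight star: at most one edge, or all pairs of distinct
triangles meet in the same 2-element kernel `K`. -/
def TightStar {X : Type*} (btw : X → X → X → Prop) : Prop :=
  {T : Finset X | IsTriangle btw T}.Subsingleton ∨
  ∃ K : Set X, K.ncard = 2 ∧ ∀ E F : Finset X, IsTriangle btw E → IsTriangle btw F → E ≠ F →
    (E : Set X) ∩ (F : Set X) = K

/-- A class of betweenness structures is hereditary if it is closed under isomorphism
and under taking induced substructures. -/
def Hereditary (Φ : ∀ X : Type, (X → X → X → Prop) → Prop) : Prop :=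
  (∀ (X Y : Type) (bX : X → X → X → Prop) (bY : Y → Y → Y → Prop),
      BIso bX bY → Φ X bX → Φ Y bY) ∧
  (∀ (X : Type) (bX : X → X → X → Prop) (Y : Set X), Y.Nonempty →
      Φ X bX → Φ Y (fun a b c : Y => bX a.1 b.1 c.1))

/-! Weight functions of the graphs `Q`, `R`, `S`, `T`.
In each of the following, the vertex `Sum.inl a : Fin m ⊕ Bool` is the point
`x_{a+1}` (so `x₁,…,x_m` with `m = n - 2` are `Sum.inl 0, …, Sum.inl (m-1)`),
`Sum.inr false` is `y` and `Sum.inr true` is `z`. The parameter `i` is 1-based,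
as in the paper. Non-edges have weight `⊤`. -/

/-- `Q²ₙ` with `m = n - 2`: path plus edges `{y,x₁}, {z,x₁}, {y,z}`. -/
noncomputable def wQ2 (m : ℕ) : Fin m ⊕ Bool → Fin m ⊕ Bool → ℝ≥0∞
  | Sum.inl a, Sum.inl b => if (a : ℕ) + 1 = (b : ℕ) ∨ (b : ℕ) + 1 = (a : ℕ) then 1 else ⊤
  | Sum.inl a, Sum.inr _ => if (a : ℕ) = 0 then 1 else ⊤
  | Sum.inr _, Sum.inl b => if (b : ℕ) = 0 then 1 else ⊤
  | Sum.inr c, Sum.inr d => if c ≠ d then 1 else ⊤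

/-- `Q³ₙ` with `m = n - 2`: path plus edges `{y,x₁}, {z,x₁}`. -/
noncomputable def wQ3 (m : ℕ) : Fin m ⊕ Bool → Fin m ⊕ Bool → ℝ≥0∞
  | Sum.inl a, Sum.inl b => if (a : ℕ) + 1 = (b : ℕ) ∨ (b : ℕ) + 1 = (a : ℕ) then 1 else ⊤
  | Sum.inl a, Sum.inr _ => if (a : ℕ) = 0 then 1 else ⊤
  | Sum.inr _, Sum.inl b => if (b : ℕ) = 0 then 1 else ⊤
  | Sum.inr _, Sum.inr _ => ⊤

/-- `R²ₙ,ᵢ` with `m = n - 2`: path with edge `{xᵢ, xᵢ₊₁}` deleted, plus unit edges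
`{y,xᵢ}, {z,xᵢ}, {y,xᵢ₊₁}, {z,xᵢ₊₁}, {y,z}`. -/
noncomputable def wR2 (m i : ℕ) : Fin m ⊕ Bool → Fin m ⊕ Bool → ℝ≥0∞
  | Sum.inl a, Sum.inl b =>
      if ((a : ℕ) + 1 = (b : ℕ) ∧ (a : ℕ) + 1 ≠ i) ∨
         ((b : ℕ) + 1 = (a : ℕ) ∧ (b : ℕ) + 1 ≠ i) then 1 else ⊤
  | Sum.inl a, Sum.inr _ => if (a : ℕ) + 1 = i ∨ (a : ℕ) = i then 1 else ⊤
  | Sum.inr _, Sum.inl b => if (b : ℕ) + 1 = i ∨ (b : ℕ) = i then 1 else ⊤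
  | Sum.inr c, Sum.inr d => if c ≠ d then 1 else ⊤

/-- `R³ₙ,ᵢ` with `m = n - 2`: path with edge `{xᵢ, xᵢ₊₁}` deleted, plus unit edges
`{y,xᵢ}, {z,xᵢ}` and weight-2 edges `{y,xᵢ₊₁}, {z,xᵢ₊₁}`. -/
noncomputable def wR3 (m i : ℕ) : Fin m ⊕ Bool → Fin m ⊕ Bool → ℝ≥0∞
  | Sum.inl a, Sum.inl b =>
      if ((a : ℕ) + 1 = (b : ℕ) ∧ (a : ℕ) + 1 ≠ i) ∨
         ((b : ℕ) + 1 = (a : ℕ) ∧ (b : ℕ) + 1 ≠ i) then 1 else ⊤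
  | Sum.inl a, Sum.inr _ => if (a : ℕ) + 1 = i then 1 else if (a : ℕ) = i then 2 else ⊤
  | Sum.inr _, Sum.inl b => if (b : ℕ) + 1 = i then 1 else if (b : ℕ) = i then 2 else ⊤
  | Sum.inr _, Sum.inr _ => ⊤

/-- `R⁴ₙ,ᵢ` with `m = n - 2`: path with edge `{xᵢ, xᵢ₊₁}` deleted, plus unit edges
`{y,xᵢ}, {z,xᵢ}, {y,xᵢ₊₁}, {z,xᵢ₊₁}`. -/
noncomputable def wR4 (m i : ℕ) : Fin m ⊕ Bool → Fin m ⊕ Bool → ℝ≥0∞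
  | Sum.inl a, Sum.inl b =>
      if ((a : ℕ) + 1 = (b : ℕ) ∧ (a : ℕ) + 1 ≠ i) ∨
         ((b : ℕ) + 1 = (a : ℕ) ∧ (b : ℕ) + 1 ≠ i) then 1 else ⊤
  | Sum.inl a, Sum.inr _ => if (a : ℕ) + 1 = i ∨ (a : ℕ) = i then 1 else ⊤
  | Sum.inr _, Sum.inl b => if (b : ℕ) + 1 = i ∨ (b : ℕ) = i then 1 else ⊤
  | Sum.inr _, Sum.inr _ => ⊤

/-- `S²ₙ` with `m = n - 2`: path plus unit edges `{x₁,y}, {x_m,z}` and an edge `{y,z}`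
of weight `n - 2 = m`. -/
noncomputable def wS2 (m : ℕ) : Fin m ⊕ Bool → Fin m ⊕ Bool → ℝ≥0∞
  | Sum.inl a, Sum.inl b => if (a : ℕ) + 1 = (b : ℕ) ∨ (b : ℕ) + 1 = (a : ℕ) then 1 else ⊤
  | Sum.inl a, Sum.inr c =>
      if (c = false ∧ (a : ℕ) = 0) ∨ (c = true ∧ (a : ℕ) = m - 1) then 1 else ⊤
  | Sum.inr c, Sum.inl b =>
      if (c = false ∧ (b : ℕ) = 0) ∨ (c = true ∧ (b : ℕ) = m - 1) then 1 else ⊤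
  | Sum.inr c, Sum.inr d => if c ≠ d then (m : ℝ≥0∞) else ⊤

/-- `S³ₙ` with `m = n - 2`: path plus a unit edge `{x₁,y}`, a weight-2 edge `{x_m,z}`
and an edge `{y,z}` of weight `n - 2 = m`. -/
noncomputable def wS3 (m : ℕ) : Fin m ⊕ Bool → Fin m ⊕ Bool → ℝ≥0∞
  | Sum.inl a, Sum.inl b => if (a : ℕ) + 1 = (b : ℕ) ∨ (b : ℕ) + 1 = (a : ℕ) then 1 else ⊤
  | Sum.inl a, Sum.inr c =>
      if c = false ∧ (a : ℕ) = 0 then 1 else if c = true ∧ (a : ℕ) = m - 1 then 2 else ⊤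
  | Sum.inr c, Sum.inl b =>
      if c = false ∧ (b : ℕ) = 0 then 1 else if c = true ∧ (b : ℕ) = m - 1 then 2 else ⊤
  | Sum.inr c, Sum.inr d => if c ≠ d then (m : ℝ≥0∞) else ⊤

/-- `S⁴ₙ` with `m = n - 2`: path plus unit edges `{x₁,y}, {x_m,z}` and an edge `{y,z}`
of weight `n - 3 = m - 1`. -/
noncomputable def wS4 (m : ℕ) : Fin m ⊕ Bool → Fin m ⊕ Bool → ℝ≥0∞
  | Sum.inl a, Sum.inl b => if (a : ℕ) + 1 = (b : ℕ) ∨ (b : ℕ) + 1 = (a : ℕ) then 1 else ⊤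
  | Sum.inl a, Sum.inr c =>
      if (c = false ∧ (a : ℕ) = 0) ∨ (c = true ∧ (a : ℕ) = m - 1) then 1 else ⊤
  | Sum.inr c, Sum.inl b =>
      if (c = false ∧ (b : ℕ) = 0) ∨ (c = true ∧ (b : ℕ) = m - 1) then 1 else ⊤
  | Sum.inr c, Sum.inr d => if c ≠ d then ((m - 1 : ℕ) : ℝ≥0∞) else ⊤

/-- `Tₙ,ᵢ` with `m = n - 4`; the vertices `Sum.inl a` are the points `x_{a+1}`, and
`Sum.inr 0, Sum.inr 1, Sum.inr 2, Sum.inr 3` are `y, z, u, v` respectively. All edges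
have unit weight: the path edges `{x_j, x_{j+1}}` (`1 ≤ j ≤ n-5`, `j ≠ i`) together with
`{xᵢ,y}, {xᵢ,z}, {y,u}, {y,v}, {z,u}, {z,v}, {u,xᵢ₊₁}, {v,xᵢ₊₁}`. -/
noncomputable def wT (m i : ℕ) : Fin m ⊕ Fin 4 → Fin m ⊕ Fin 4 → ℝ≥0∞
  | Sum.inl a, Sum.inl b =>
      if ((a : ℕ) + 1 = (b : ℕ) ∧ (a : ℕ) + 1 ≠ i) ∨
         ((b : ℕ) + 1 = (a : ℕ) ∧ (b : ℕ) + 1 ≠ i) then 1 else ⊤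
  | Sum.inl a, Sum.inr c =>
      if ((a : ℕ) + 1 = i ∧ (c : ℕ) ≤ 1) ∨ ((a : ℕ) = i ∧ 2 ≤ (c : ℕ)) then 1 else ⊤
  | Sum.inr c, Sum.inl b =>
      if ((b : ℕ) + 1 = i ∧ (c : ℕ) ≤ 1) ∨ ((b : ℕ) = i ∧ 2 ≤ (c : ℕ)) then 1 else ⊤
  | Sum.inr c, Sum.inr d =>
      if ((c : ℕ) ≤ 1 ∧ 2 ≤ (d : ℕ)) ∨ ((d : ℕ) ≤ 1 ∧ 2 ≤ (c : ℕ)) then 1 else ⊤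


section Aux
variable {X : Type*} {btw : X → X → X → Prop}

lemma ct_swap1 (hB : IsBtw btw) {x y z : X} (h : CollinearTriple btw x y z) :
    CollinearTriple btw y x z := by
  rcases h with h | h | h
  · exact Or.inr (Or.inl h)
  · exact Or.inl h
  · exact Or.inr (Or.inr (hB.2.1 _ _ _ h))

lemma ct_swap2 (hB : IsBtw btw) {x y z : X} (h : CollinearTriple btw x y z) :
    CollinearTriple btw x z y := by
  rcases h with h | h | h
  · exact Or.inr (Or.inr h)
  · exact Or.inr (Or.inl (hB.2.1 _ _ _ h))
  · exact Or.inl h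

lemma collinearSet_iff (hB : IsBtw btw) [DecidableEq X] {x y z : X}
    (hxy : x ≠ y) (hxz : x ≠ z) (hyz : y ≠ z) :
    CollinearSet btw ({x, y, z} : Finset X) ↔ CollinearTriple btw x y z := by
  constructor
  · rintro ⟨p, q, r, hset, hct⟩
    have hx : x = p ∨ x = q ∨ x = r := by
      have : x ∈ ({p, q, r} : Set X) := by
        rw [← hset]; simp
      simpa using this
    have hy : y = p ∨ y = q ∨ y = r := by
      have : y ∈ ({p, q, r} : Set X) := by
        rw [← hset]; simp
      simpa using this
    have hz : z = p ∨ z = q ∨ z = r := by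
      have : z ∈ ({p, q, r} : Set X) := by
        rw [← hset]; simp
      simpa using this
    have hp : p = x ∨ p = y ∨ p = z := by
      have : p ∈ (({x, y, z} : Finset X) : Set X) := by
        rw [hset]; simp
      simpa using this
    have hq : q = x ∨ q = y ∨ q = z := by
      have : q ∈ (({x, y, z} : Finset X) : Set X) := by
        rw [hset]; simp
      simpa using this
    have hr : r = x ∨ r = y ∨ r = z := by
      have : r ∈ (({x, y, z} : Finset X) : Set X) := by
        rw [hset]; simp
      simpa using this
    clear hset
    rcases hx with rfl | rfl | rfl <;> rcases hy with rfl | rfl | rfl <;>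
      rcases hz with rfl | rfl | rfl <;>
      first
        | exact absurd rfl hxy
        | exact absurd rfl hxz
        | exact absurd rfl hyz
        | exact hct
        | exact ct_swap1 hB hct
        | exact ct_swap2 hB hct
        | exact ct_swap1 hB (ct_swap2 hB hct)
        | exact ct_swap2 hB (ct_swap1 hB hct)
        | exact ct_swap1 hB (ct_swap2 hB (ct_swap1 hB hct))
  · intro h
    exact ⟨x, y, z, by simp, h⟩

end Aux

set_option maxHeartbeats 4000000 in
lemma lemU {X : Type*} {btw : X → X → X → Prop} (hB : IsBtw btw)
    (a b c u v w : X)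
    (hne_ab : a ≠ b)
    (hne_ac : a ≠ c)
    (hne_au : a ≠ u)
    (hne_av : a ≠ v)
    (hne_aw : a ≠ w)
    (hne_bc : b ≠ c)
    (hne_bu : b ≠ u)
    (hne_bv : b ≠ v)
    (hne_bw : b ≠ w)
    (hne_cu : c ≠ u)
    (hne_cv : c ≠ v)
    (hne_cw : c ≠ w)
    (hne_uv : u ≠ v)
    (hne_uw : u ≠ w)
    (hne_vw : v ≠ w)
    (hT : ¬ CollinearTriple btw a b c)
    (hC_abu : CollinearTriple btw a b u)
    (hC_abv : CollinearTriple btw a b v)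
    (hC_abw : CollinearTriple btw a b w)
    (hC_acu : CollinearTriple btw a c u)
    (hC_acv : CollinearTriple btw a c v)
    (hC_acw : CollinearTriple btw a c w)
    (hC_auv : CollinearTriple btw a u v)
    (hC_auw : CollinearTriple btw a u w)
    (hC_avw : CollinearTriple btw a v w)
    (hC_bcu : CollinearTriple btw b c u)
    (hC_bcv : CollinearTriple btw b c v)
    (hC_bcw : CollinearTriple btw b c w)
    (hC_buv : CollinearTriple btw b u v)
    (hC_buw : CollinearTriple btw b u w)
    (hC_bvw : CollinearTriple btw b v w)
    (hC_cuv : CollinearTriple btw c u v)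
    (hC_cuw : CollinearTriple btw c u w)
    (hC_cvw : CollinearTriple btw c v w)
    (hC_uvw : CollinearTriple btw u v w) : False := by
  obtain ⟨hP1, hP2, hP3, hP4⟩ := hB
  simp only [CollinearTriple] at hT hC_abu hC_abv hC_abw hC_acu hC_acv hC_acw hC_auv hC_auw hC_avw hC_bcu hC_bcv hC_bcw hC_buv hC_buw hC_bvw hC_cuv hC_cuw hC_cvw hC_uvw
  rcases hC_abu with h1 | h385 | h769
  · rcases hC_acu with h3 | h380 | h383
    · rcases hC_bcu with h5 | h7 | h9
      · exact hT (Or.inl (hP2 c b a (hP4 u b a c (hP2 a b u h1) (hP2 b c u h5)).2))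
      · exact hT (Or.inr (Or.inr (hP2 b c a (hP4 u c a b (hP2 a c u h3) (hP2 c b u h7)).2)))
      · rcases hC_abv with h11 | h38 | h144
        · rcases hC_acv with h13 | h33 | h36
          · rcases hC_auv with h15 | h25 | h28
            · have h17 : btw b u v := (hP4 a u v b h15 h1).2
              have h18 : btw c u v := (hP4 a u v c h15 h3).2
              rcases hC_bcv with h19 | h21 | h23
              · exact (hne_cu).symm (hP3 u c b (hP4 v c b u (hP2 b c v h19) (hP2 c u v h18)).2 (hP2 b u c h9))
              · exact (hne_bu).symm (hP3 u b c (hP4 v b c u (hP2 c b v h21) (hP2 b u v h17)).2 h9)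
              · exact hne_uv (hP3 u v c (hP4 b v c u h23 h17).2 (hP2 c u v h18))
            · exact (hne_ab).symm (hP3 b a v (hP4 u a v b h25 (hP2 a b u h1)).2 h11)
            · have h30 : btw b v u := (hP4 a v u b h28 h11).2
              have h31 : btw c v u := (hP4 a v u c h28 h13).2
              exact (hne_uv).symm (hP3 v u b (hP4 c u b v (hP2 b u c h9) h31).2 (hP2 b v u h30))
          · exact hT (Or.inr (Or.inl (hP4 v a c b (hP2 c a v h33) (hP2 a b v h11)).2))
          · exact hT (Or.inl (hP4 a v c b h36 h11).1)
        · rcases hC_bcv with h40 | h139 | h142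
          · have h42 : btw b u v := (hP4 b c v u h40 h9).1
            have h43 : btw u c v := (hP4 b c v u h40 h9).2
            rcases hC_acv with h44 | h46 | h50
            · exact hT (Or.inr (Or.inl (hP2 c a b (hP4 v a b c (hP2 b a v h38) (hP2 a c v h44)).2)))
            · have h48 : btw v a u := (hP4 v c u a (hP2 u c v h43) (hP2 c a v h46)).1
              have h49 : btw a u b := (hP4 v u b a (hP2 b u v h42) h48).2
              exact (hne_bu).symm (hP3 u b u (hP4 a b u u h1 h49).2 (hP2 u u b (hP1 u b)))
            · have h52 : btw a v u := (hP4 a c u v h3 h50).1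
              rcases hC_abw with h53 | h87 | h122
              · rcases hC_acw with h55 | h80 | h85
                · rcases hC_auw with h59 | h71 | h74
                  · have h61 : btw b u w := (hP4 a u w b h59 h1).2
                    have h62 : btw c u w := (hP4 a u w c h59 h3).2
                    rcases hC_bcw with h64 | h66 | h69
                    · exact (hne_cu).symm (hP3 u c b (hP4 w c b u (hP2 b c w h64) (hP2 c u w h62)).2 (hP2 b u c h9))
                    · exact (hne_bu).symm (hP3 u b c (hP4 w b c u (hP2 c b w h66) (hP2 b u w h61)).2 h9)
                    · exact hne_uw (hP3 u w b (hP4 c w b u (hP2 b w c h69) h62).2 (hP2 b u w h61))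
                  · exact (hne_ab).symm (hP3 b a u (hP4 w a u b (hP2 u a w h71) (hP2 a b w h53)).2 h1)
                  · have h76 : btw b w u := (hP4 a w u b h74 h53).2
                    have h77 : btw c w u := (hP4 a w u c h74 h55).2
                    exact (hne_uw).symm (hP3 w u c (hP4 b u c w h9 h76).2 (hP2 c w u h77))
                · exact hT (Or.inr (Or.inl (hP4 w a c b (hP2 c a w h80) (hP2 a b w h53)).2))
                · exact hT (Or.inl (hP4 a w c b h85 h53).1)
              · rcases hC_bcw with h89 | h115 | h118
                · have h91 : btw b u w := (hP4 b c w u h89 h9).1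
                  rcases hC_acw with h93 | h95 | h99
                  · exact hT (Or.inr (Or.inl (hP2 c a b (hP4 w a b c (hP2 b a w h87) (hP2 a c w h93)).2)))
                  · exact hT (Or.inr (Or.inr (hP4 w c b a (hP2 b c w h89) (hP2 c a w h95)).2))
                  · have h101 : btw a w u := (hP4 a c u w h3 h99).1
                    rcases hC_bvw with h102 | h107 | h110
                    · have h104 : btw a v w := (hP4 b v w a h102 h38).2
                      have h106 : btw u v w := (hP4 b v w u h102 h42).2
                      exact hne_vw (hP3 v w u (hP4 a w u v h101 h104).2 (hP2 u v w h106))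
                    · exact hne_ab (hP3 a b w (hP4 v b w a h107 (hP2 b a v h38)).2 h87)
                    · have h112 : btw a w v := (hP4 b w v a h110 h87).2
                      have h114 : btw u w v := (hP4 b w v u h110 h91).2
                      exact (hne_vw).symm (hP3 w v a (hP4 u v a w (hP2 a v u h52) h114).2 (hP2 a w v h112))
                · exact hT (Or.inl (hP4 w b c a (hP2 c b w h115) (hP2 b a w h87)).2)
                · exact hT (Or.inr (Or.inl (hP4 b w c a h118 h87).1))
              · have h124 : btw a w u := (hP4 a b u w h1 h122).1
                have h125 : btw w b u := (hP4 a b u w h1 h122).2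
                have h126 : btw b w v := (hP4 b a v w h38 (hP2 a w b h122)).1
                have h127 : btw w a v := (hP4 b a v w h38 (hP2 a w b h122)).2
                rcases hC_uvw with h128 | h131 | h137
                · have h130 : btw v w a := (hP4 u w a v (hP2 a w u h124) h128).2
                  exact (hne_aw).symm (hP3 w a b (hP4 v a b w (hP2 b a v h38) h130).2 h122)
                · exact (hne_bw).symm (hP3 w b v (hP4 w u v b (hP2 v u w h131) h125).1 h126)
                · exact (hne_av).symm (hP3 v a u (hP4 v w u a (hP2 u w v h137) (hP2 w a v h127)).1 h52)
          · exact hT (Or.inl (hP4 v b c a (hP2 c b v h139) (hP2 b a v h38)).2)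
          · exact hT (Or.inr (Or.inl (hP4 b v c a h142 h38).1))
        · have h146 : btw a v u := (hP4 a b u v h1 h144).1
          have h147 : btw v b u := (hP4 a b u v h1 h144).2
          rcases hC_acv with h148 | h150 | h264
          · exact hT (Or.inr (Or.inr (hP4 a v b c h144 h148).1))
          · rcases hC_bcv with h152 | h154 | h262
            · exact hne_bu (hP3 b u v (hP4 b c v u h152 h9).1 (hP2 v b u h147))
            · have h156 : btw c u v := (hP4 c b v u h154 (hP2 b u c h9)).1
              rcases hC_abw with h157 | h190 | h213
              · rcases hC_acw with h161 | h183 | h186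
                · rcases hC_auw with h163 | h174 | h177
                  · have h165 : btw b u w := (hP4 a u w b h163 h1).2
                    have h166 : btw c u w := (hP4 a u w c h163 h3).2
                    rcases hC_bcw with h168 | h170 | h172
                    · exact (hne_cu).symm (hP3 u c b (hP4 w c b u (hP2 b c w h168) (hP2 c u w h166)).2 (hP2 b u c h9))
                    · exact (hne_bu).symm (hP3 u b c (hP4 w b c u (hP2 c b w h170) (hP2 b u w h165)).2 h9)
                    · exact hne_uw (hP3 u w b (hP4 c w b u (hP2 b w c h172) h166).2 (hP2 b u w h165))
                  · exact (hne_ab).symm (hP3 b a u (hP4 w a u b (hP2 u a w h174) (hP2 a b w h157)).2 h1)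
                  · have h179 : btw b w u := (hP4 a w u b h177 h157).2
                    have h180 : btw c w u := (hP4 a w u c h177 h161).2
                    exact (hne_uw).symm (hP3 w u c (hP4 b u c w h9 h179).2 (hP2 c w u h180))
                · exact hT (Or.inr (Or.inl (hP4 w a c b (hP2 c a w h183) (hP2 a b w h157)).2))
                · exact hT (Or.inl (hP4 a w c b h186 h157).1)
              · have h192 : btw b v w := (hP4 b a w v h190 (hP2 a v b h144)).1
                have h193 : btw v a w := (hP4 b a w v h190 (hP2 a v b h144)).2
                rcases hC_bcw with h194 | h206 | h209
                · have h196 : btw b u w := (hP4 b c w u h194 h9).1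
                  rcases hC_uvw with h198 | h202 | h204
                  · exact (hne_bu).symm (hP3 u b w (hP4 u v w b h198 (hP2 v b u h147)).1 h196)
                  · exact (hne_bv).symm (hP3 v b w (hP4 v u w b h202 h147).1 h192)
                  · exact (hne_av).symm (hP3 v a u (hP4 v w u a (hP2 u w v h204) h193).1 h146)
                · exact hT (Or.inl (hP4 w b c a (hP2 c b w h206) (hP2 b a w h190)).2)
                · exact hne_bv (hP3 b v c (hP4 b w c v h209 h192).1 (hP2 c b v h154))
              · have h215 : btw a w u := (hP4 a b u w h1 h213).1
                have h216 : btw w b u := (hP4 a b u w h1 h213).2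
                rcases hC_cvw with h217 | h225 | h231
                · have h220 : btw a v w := (hP4 c v w a h217 h150).2
                  have h224 : btw u v w := (hP4 c v w u h217 h156).2
                  exact hne_vw (hP3 v w u (hP4 a w u v h215 h220).2 (hP2 u v w h224))
                · have h228 : btw b c w := (hP4 v c w b h225 (hP2 c b v h154)).2
                  exact hT (Or.inr (Or.inr (hP2 b c a (hP4 b w a c (hP2 a w b h213) h228).1)))
                · rcases hC_acw with h233 | h238 | h250
                  · have h235 : btw c w u := (hP4 a w u c h215 h233).2
                    have h236 : btw w u v := (hP4 c u v w h156 h235).2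
                    exact hne_bu (hP3 b u w (hP4 v u w b (hP2 w u v h236) h147).2 (hP2 w b u h216))
                  · have h240 : btw a w v := (hP4 c w v a h231 h238).2
                    have h241 : btw w v b := (hP4 a v b w h144 h240).2
                    rcases hC_bcw with h243 | h245 | h248
                    · exact (hne_aw).symm (hP3 w a b (hP4 w c b a (hP2 b c w h243) (hP2 c a w h238)).1 h213)
                    · have h247 : btw b w v := (hP4 c w v b h231 h245).2
                      exact (hne_vw).symm (hP3 w v w (hP4 b v w w (hP2 w v b h241) h247).2 (hP2 w w v (hP1 w v)))
                    · exact hT (Or.inr (Or.inl (hP2 c a b (hP4 c w b a (hP2 b w c h248) h238).1)))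
                  · have h252 : btw w a v := (hP4 c a v w h150 (hP2 a w c h250)).2
                    rcases hC_uvw with h254 | h257 | h260
                    · exact (hne_aw).symm (hP3 w a u (hP4 w v u a (hP2 u v w h254) h252).1 h215)
                    · exact hne_bu (hP3 b u w (hP4 v u w b h257 h147).2 (hP2 w b u h216))
                    · exact (hne_av).symm (hP3 v a u (hP4 v w u a (hP2 u w v h260) (hP2 w a v h252)).1 h146)
            · exact hT (Or.inr (Or.inl (hP2 c a b (hP4 c v b a (hP2 b v c h262) h150).1)))
          · have h266 : btw v c u := (hP4 a c u v h3 h264).2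
            rcases hC_bcv with h267 | h269 | h272
            · exact hne_bu (hP3 b u v (hP4 b c v u h267 h9).1 (hP2 v b u h147))
            · have h271 : btw b c u := (hP4 v c u b h266 (hP2 c b v h269)).2
              exact hT (Or.inl (hP2 c b a (hP4 u b a c (hP2 a b u h1) (hP2 b c u h271)).2))
            · rcases hC_abw with h274 | h307 | h333
              · have h276 : btw a v w := (hP4 a b w v h274 h144).1
                rcases hC_acw with h278 | h302 | h305
                · rcases hC_auw with h281 | h293 | h296
                  · have h283 : btw b u w := (hP4 a u w b h281 h1).2
                    have h284 : btw c u w := (hP4 a u w c h281 h3).2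
                    rcases hC_bcw with h286 | h288 | h291
                    · exact (hne_cu).symm (hP3 u c b (hP4 w c b u (hP2 b c w h286) (hP2 c u w h284)).2 (hP2 b u c h9))
                    · exact (hne_bu).symm (hP3 u b c (hP4 w b c u (hP2 c b w h288) (hP2 b u w h283)).2 h9)
                    · exact hne_uw (hP3 u w b (hP4 c w b u (hP2 b w c h291) h284).2 (hP2 b u w h283))
                  · exact (hne_ab).symm (hP3 b a u (hP4 w a u b (hP2 u a w h293) (hP2 a b w h274)).2 h1)
                  · have h298 : btw b w u := (hP4 a w u b h296 h274).2
                    have h299 : btw c w u := (hP4 a w u c h296 h278).2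
                    exact (hne_uw).symm (hP3 w u c (hP4 b u c w h9 h298).2 (hP2 c w u h299))
                · exact (hne_av).symm (hP3 v a w (hP4 c a w v h302 (hP2 a v c h264)).2 h276)
                · exact hT (Or.inl (hP4 a w c b h305 h274).1)
              · have h309 : btw b v w := (hP4 b a w v h307 (hP2 a v b h144)).1
                have h310 : btw v a w := (hP4 b a w v h307 (hP2 a v b h144)).2
                rcases hC_bcw with h311 | h323 | h326
                · have h315 : btw v c w := (hP4 b c w v h311 h272).2
                  rcases hC_uvw with h316 | h319 | h321
                  · exact hne_cv (hP3 c v w (hP4 u v w c h316 (hP2 v c u h266)).2 h315)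
                  · exact (hne_bv).symm (hP3 v b w (hP4 v u w b h319 h147).1 h309)
                  · exact (hne_av).symm (hP3 v a u (hP4 v w u a (hP2 u w v h321) h310).1 h146)
                · exact hT (Or.inl (hP4 w b c a (hP2 c b w h323) (hP2 b a w h307)).2)
                · exact hT (Or.inr (Or.inl (hP4 b w c a h326 h307).1))
              · have h335 : btw a w u := (hP4 a b u w h1 h333).1
                have h336 : btw w b u := (hP4 a b u w h1 h333).2
                rcases hC_acw with h337 | h342 | h355
                · exact hT (Or.inr (Or.inr (hP4 a w b c h333 h337).1))
                · have h344 : btw c v w := (hP4 c a w v h342 (hP2 a v c h264)).1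
                  have h345 : btw v a w := (hP4 c a w v h342 (hP2 a v c h264)).2
                  rcases hC_uvw with h346 | h349 | h353
                  · exact (hne_aw).symm (hP3 w a u (hP4 w v u a (hP2 u v w h346) (hP2 v a w h345)).1 h335)
                  · have h352 : btw u v c := (hP4 w v c u (hP2 c v w h344) (hP2 v u w h349)).2
                    exact (hne_cv).symm (hP3 v c v (hP4 u c v v (hP2 v c u h266) h352).2 (hP2 v v c (hP1 v c)))
                  · exact (hne_av).symm (hP3 v a u (hP4 v w u a (hP2 u w v h353) h345).1 h146)
                · rcases hC_bcw with h358 | h362 | h365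
                  · exact hne_bu (hP3 b u w (hP4 b c w u h358 h9).1 (hP2 w b u h336))
                  · exact hT (Or.inl (hP2 c b a (hP4 c w a b (hP2 a w c h355) h362).1))
                  · rcases hC_uvw with h367 | h372 | h375
                    · have h369 : btw v w a := (hP4 u w a v (hP2 a w u h335) h367).2
                      have h370 : btw c v w := (hP4 u v w c h367 (hP2 v c u h266)).2
                      have h371 : btw w v b := (hP4 a v b w h144 (hP2 v w a h369)).2
                      exact hne_vw (hP3 v w c (hP4 b w c v h365 (hP2 w v b h371)).2 (hP2 c v w h370))
                    · exact hne_bu (hP3 b u w (hP4 v u w b h372 h147).2 (hP2 w b u h336))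
                    · have h377 : btw b w v := (hP4 u w v b h375 (hP2 w b u h336)).2
                      have h378 : btw w v a := (hP4 u v a w (hP2 a v u h146) h375).2
                      have h379 : btw v w c := (hP4 a w c v h355 (hP2 w v a h378)).2
                      exact (hne_vw).symm (hP3 w v c (hP4 b v c w h272 h377).2 h379)
    · exact hT (Or.inr (Or.inl (hP4 u a c b (hP2 c a u h380) (hP2 a b u h1)).2))
    · exact hT (Or.inl (hP4 a u c b h383 h1).1)
  · rcases hC_bcu with h387 | h764 | h767
    · rcases hC_acu with h389 | h391 | h393
      · exact hT (Or.inr (Or.inl (hP2 c a b (hP4 u a b c (hP2 b a u h385) (hP2 a c u h389)).2)))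
      · exact hT (Or.inr (Or.inr (hP4 u c b a (hP2 b c u h387) (hP2 c a u h391)).2))
      · rcases hC_abv with h395 | h501 | h529
        · rcases hC_acv with h397 | h496 | h499
          · rcases hC_bcv with h401 | h403 | h405
            · exact hT (Or.inl (hP2 c b a (hP4 v b a c (hP2 a b v h395) (hP2 b c v h401)).2))
            · exact hT (Or.inr (Or.inr (hP2 b c a (hP4 v c a b (hP2 a c v h397) (hP2 c b v h403)).2)))
            · have h407 : btw b v u := (hP4 b c u v h387 h405).1
              rcases hC_abw with h408 | h443 | h477
              · rcases hC_acw with h410 | h434 | h439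
                · rcases hC_avw with h414 | h425 | h428
                  · have h416 : btw c v w := (hP4 a v w c h414 h397).2
                    have h418 : btw b v w := (hP4 a v w b h414 h395).2
                    rcases hC_bcw with h419 | h421 | h423
                    · exact (hne_cv).symm (hP3 v c b (hP4 w c b v (hP2 b c w h419) (hP2 c v w h416)).2 (hP2 b v c h405))
                    · exact (hne_bv).symm (hP3 v b c (hP4 w b c v (hP2 c b w h421) (hP2 b v w h418)).2 h405)
                    · exact hne_vw (hP3 v w b (hP4 c w b v (hP2 b w c h423) h416).2 (hP2 b v w h418))
                  · exact (hne_ab).symm (hP3 b a v (hP4 w a v b (hP2 v a w h425) (hP2 a b w h408)).2 h395)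
                  · have h430 : btw c w v := (hP4 a w v c h428 h410).2
                    have h431 : btw b w v := (hP4 a w v b h428 h408).2
                    exact (hne_vw).symm (hP3 w v b (hP4 c v b w (hP2 b v c h405) h430).2 (hP2 b w v h431))
                · exact hT (Or.inr (Or.inl (hP4 w a c b (hP2 c a w h434) (hP2 a b w h408)).2))
                · exact hT (Or.inl (hP4 a w c b h439 h408).1)
              · rcases hC_bcw with h445 | h472 | h475
                · rcases hC_acw with h449 | h451 | h455
                  · exact hT (Or.inr (Or.inl (hP2 c a b (hP4 w a b c (hP2 b a w h443) (hP2 a c w h449)).2)))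
                  · exact hT (Or.inr (Or.inr (hP4 w c b a (hP2 b c w h445) (hP2 c a w h451)).2))
                  · rcases hC_buw with h458 | h463 | h466
                    · have h460 : btw a u w := (hP4 b u w a h458 h385).2
                      have h461 : btw c u w := (hP4 b u w c h458 h387).2
                      exact hne_uw (hP3 u w c (hP4 a w c u h455 h460).2 (hP2 c u w h461))
                    · exact hne_ab (hP3 a b u (hP4 w b u a (hP2 u b w h463) (hP2 b a w h443)).2 h385)
                    · have h468 : btw c w u := (hP4 b w u c h466 h445).2
                      have h471 : btw a w u := (hP4 b w u a h466 h443).2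
                      exact (hne_uw).symm (hP3 w u c (hP4 a u c w h393 h471).2 (hP2 c w u h468))
                · exact hT (Or.inl (hP4 w b c a (hP2 c b w h472) (hP2 b a w h443)).2)
                · exact hT (Or.inr (Or.inl (hP4 b w c a h475 h443).1))
              · have h479 : btw b w u := (hP4 b a u w h385 (hP2 a w b h477)).1
                have h480 : btw w a u := (hP4 b a u w h385 (hP2 a w b h477)).2
                have h481 : btw a w v := (hP4 a b v w h395 h477).1
                have h482 : btw w b v := (hP4 a b v w h395 h477).2
                rcases hC_uvw with h483 | h488 | h494
                · exact (hne_bw).symm (hP3 w b u (hP4 w v u b (hP2 u v w h483) h482).1 h479)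
                · exact (hne_aw).symm (hP3 w a v (hP4 w u v a (hP2 v u w h488) h480).1 h481)
                · exact (hne_bv).symm (hP3 v b u (hP4 v w u b (hP2 u w v h494) (hP2 w b v h482)).1 h407)
          · exact hT (Or.inr (Or.inl (hP4 v a c b (hP2 c a v h496) (hP2 a b v h395)).2))
          · exact hT (Or.inl (hP4 a v c b h499 h395).1)
        · rcases hC_bcv with h503 | h524 | h527
          · rcases hC_acv with h505 | h509 | h511
            · exact hT (Or.inr (Or.inl (hP2 c a b (hP4 v a b c (hP2 b a v h501) (hP2 a c v h505)).2)))
            · exact hT (Or.inr (Or.inr (hP4 v c b a (hP2 b c v h503) (hP2 c a v h509)).2))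
            · rcases hC_buv with h513 | h517 | h520
              · have h515 : btw c u v := (hP4 b u v c h513 h387).2
                have h516 : btw a u v := (hP4 b u v a h513 h385).2
                exact hne_uv (hP3 u v a (hP4 c v a u (hP2 a v c h511) h515).2 (hP2 a u v h516))
              · exact hne_ab (hP3 a b v (hP4 u b v a h517 (hP2 b a u h385)).2 h501)
              · have h522 : btw a v u := (hP4 b v u a h520 h501).2
                have h523 : btw c v u := (hP4 b v u c h520 h503).2
                exact (hne_uv).symm (hP3 v u c (hP4 a u c v h393 h522).2 (hP2 c v u h523))
          · exact hT (Or.inl (hP4 v b c a (hP2 c b v h524) (hP2 b a v h501)).2)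
          · exact hT (Or.inr (Or.inl (hP4 b v c a h527 h501).1))
        · have h531 : btw b v u := (hP4 b a u v h385 (hP2 a v b h529)).1
          have h532 : btw v a u := (hP4 b a u v h385 (hP2 a v b h529)).2
          rcases hC_acv with h533 | h535 | h652
          · exact hne_au (hP3 a u v (hP4 a c v u h533 h393).1 (hP2 v a u h532))
          · have h537 : btw c u v := (hP4 c a v u h535 (hP2 a u c h393)).1
            rcases hC_bcv with h538 | h540 | h649
            · exact (hne_uv).symm (hP3 v u b (hP4 v c b u (hP2 b c v h538) (hP2 c u v h537)).1 (hP2 b v u h531))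
            · rcases hC_abw with h542 | h568 | h603
              · have h544 : btw a v w := (hP4 a b w v h542 h529).1
                have h545 : btw v b w := (hP4 a b w v h542 h529).2
                rcases hC_acw with h546 | h557 | h564
                · have h548 : btw a u w := (hP4 a c w u h546 h393).1
                  rcases hC_uvw with h550 | h553 | h555
                  · have h552 : btw v u a := (hP4 w u a v (hP2 a u w h548) (hP2 u v w h550)).2
                    exact hne_au (hP3 a u b (hP4 a v b u h529 (hP2 v u a h552)).1 (hP2 b a u h385))
                  · exact (hne_av).symm (hP3 v a w (hP4 v u w a h553 h532).1 h544)
                  · exact (hne_bv).symm (hP3 v b u (hP4 v w u b (hP2 u w v h555) h545).1 h531)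
                · have h561 : btw w v c := (hP4 w a c v (hP2 c a w h557) (hP2 a v w h544)).1
                  exact hne_bv (hP3 b v c (hP4 w v c b h561 (hP2 v b w h545)).2 (hP2 c b v h540))
                · exact hT (Or.inl (hP4 a w c b h564 h542).1)
              · have h570 : btw b v w := (hP4 b a w v h568 (hP2 a v b h529)).1
                rcases hC_bcw with h572 | h596 | h599
                · rcases hC_acw with h574 | h576 | h580
                  · exact hT (Or.inr (Or.inl (hP2 c a b (hP4 w a b c (hP2 b a w h568) (hP2 a c w h574)).2)))
                  · exact hT (Or.inr (Or.inr (hP4 w c b a (hP2 b c w h572) (hP2 c a w h576)).2))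
                  · rcases hC_buw with h583 | h588 | h591
                    · have h585 : btw a u w := (hP4 b u w a h583 h385).2
                      have h586 : btw c u w := (hP4 b u w c h583 h387).2
                      exact hne_uw (hP3 u w c (hP4 a w c u h580 h585).2 (hP2 c u w h586))
                    · exact hne_ab (hP3 a b u (hP4 w b u a (hP2 u b w h588) (hP2 b a w h568)).2 h385)
                    · have h593 : btw c w u := (hP4 b w u c h591 h572).2
                      have h594 : btw v w u := (hP4 b w u v h591 h570).2
                      exact (hne_uw).symm (hP3 w u c (hP4 v u c w (hP2 c u v h537) h594).2 (hP2 c w u h593))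
                · exact hT (Or.inl (hP4 w b c a (hP2 c b w h596) (hP2 b a w h568)).2)
                · exact hne_bv (hP3 b v c (hP4 b w c v h599 h570).1 (hP2 c b v h540))
              · have h606 : btw w a u := (hP4 b a u w h385 (hP2 a w b h603)).2
                rcases hC_cvw with h607 | h615 | h621
                · have h610 : btw a v w := (hP4 c v w a h607 h535).2
                  have h612 : btw b v w := (hP4 c v w b h607 h540).2
                  exact hne_vw (hP3 v w a (hP4 b w a v (hP2 a w b h603) h612).2 (hP2 a v w h610))
                · have h618 : btw b c w := (hP4 v c w b h615 (hP2 c b v h540)).2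
                  exact hT (Or.inr (Or.inr (hP2 b c a (hP4 b w a c (hP2 a w b h603) h618).1)))
                · rcases hC_acw with h623 | h627 | h640
                  · exact hne_au (hP3 a u w (hP4 a c w u h623 h393).1 (hP2 w a u h606))
                  · have h629 : btw c u w := (hP4 c a w u h627 (hP2 a u c h393)).1
                    have h631 : btw u w v := (hP4 c w v u h621 h629).2
                    have h632 : btw w v b := (hP4 u v b w (hP2 b v u h531) h631).2
                    rcases hC_bcw with h633 | h635 | h638
                    · exact (hne_aw).symm (hP3 w a b (hP4 w c b a (hP2 b c w h633) (hP2 c a w h627)).1 h603)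
                    · have h637 : btw b w v := (hP4 c w v b h621 h635).2
                      exact (hne_vw).symm (hP3 w v w (hP4 b v w w (hP2 w v b h632) h637).2 (hP2 w w v (hP1 w v)))
                    · exact hT (Or.inr (Or.inl (hP2 c a b (hP4 c w b a (hP2 b w c h638) h627).1)))
                  · have h642 : btw w a v := (hP4 c a v w h535 (hP2 a w c h640)).2
                    rcases hC_uvw with h643 | h645 | h647
                    · exact hne_av (hP3 a v u (hP4 w v u a (hP2 u v w h643) h642).2 h532)
                    · exact hne_au (hP3 a u w (hP4 v u w a h645 h532).2 (hP2 w a u h606))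
                    · exact hne_aw (hP3 a w u (hP4 v w u a (hP2 u w v h647) (hP2 w a v h642)).2 h606)
            · exact hT (Or.inr (Or.inl (hP2 c a b (hP4 c v b a (hP2 b v c h649) h535).1)))
          · rcases hC_bcv with h654 | h656 | h658
            · exact hT (Or.inr (Or.inr (hP2 b c a (hP4 b v a c (hP2 a v b h529) h654).1)))
            · exact hT (Or.inl (hP2 c b a (hP4 c v a b (hP2 a v c h652) h656).1))
            · have h660 : btw v c u := (hP4 b c u v h387 h658).2
              rcases hC_abw with h661 | h683 | h720
              · have h663 : btw a v w := (hP4 a b w v h661 h529).1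
                have h664 : btw v b w := (hP4 a b w v h661 h529).2
                rcases hC_acw with h665 | h676 | h681
                · have h669 : btw v c w := (hP4 a c w v h665 h652).2
                  rcases hC_uvw with h670 | h672 | h674
                  · exact hne_cv (hP3 c v w (hP4 u v w c h670 (hP2 v c u h660)).2 h669)
                  · exact (hne_av).symm (hP3 v a w (hP4 v u w a h672 h532).1 h663)
                  · exact (hne_bv).symm (hP3 v b u (hP4 v w u b (hP2 u w v h674) h664).1 h531)
                · exact (hne_av).symm (hP3 v a w (hP4 c a w v h676 (hP2 a v c h652)).2 h663)
                · exact hT (Or.inl (hP4 a w c b h681 h661).1)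
              · rcases hC_bcw with h687 | h712 | h715
                · have h689 : btw v c w := (hP4 b c w v h687 h658).2
                  rcases hC_acw with h690 | h692 | h696
                  · exact hT (Or.inr (Or.inl (hP2 c a b (hP4 w a b c (hP2 b a w h683) (hP2 a c w h690)).2)))
                  · exact hne_cv (hP3 c v w (hP4 c a w v h692 (hP2 a v c h652)).1 h689)
                  · rcases hC_buw with h698 | h703 | h706
                    · have h700 : btw a u w := (hP4 b u w a h698 h385).2
                      have h701 : btw c u w := (hP4 b u w c h698 h387).2
                      exact hne_uw (hP3 u w c (hP4 a w c u h696 h700).2 (hP2 c u w h701))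
                    · exact hne_ab (hP3 a b u (hP4 w b u a (hP2 u b w h703) (hP2 b a w h683)).2 h385)
                    · have h708 : btw c w u := (hP4 b w u c h706 h687).2
                      have h711 : btw a w u := (hP4 b w u a h706 h683).2
                      exact (hne_uw).symm (hP3 w u c (hP4 a u c w h393 h711).2 (hP2 c w u h708))
                · exact hT (Or.inl (hP4 w b c a (hP2 c b w h712) (hP2 b a w h683)).2)
                · exact hT (Or.inr (Or.inl (hP4 b w c a h715 h683).1))
              · have h722 : btw b w u := (hP4 b a u w h385 (hP2 a w b h720)).1
                have h723 : btw w a u := (hP4 b a u w h385 (hP2 a w b h720)).2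
                rcases hC_acw with h724 | h728 | h740
                · exact hne_au (hP3 a u w (hP4 a c w u h724 h393).1 (hP2 w a u h723))
                · have h731 : btw c v w := (hP4 c a w v h728 (hP2 a v c h652)).1
                  have h732 : btw v a w := (hP4 c a w v h728 (hP2 a v c h652)).2
                  rcases hC_uvw with h733 | h735 | h738
                  · exact hne_av (hP3 a v u (hP4 w v u a (hP2 u v w h733) (hP2 v a w h732)).2 h532)
                  · have h737 : btw u v c := (hP4 w v c u (hP2 c v w h731) (hP2 v u w h735)).2
                    exact (hne_cv).symm (hP3 v c b (hP4 u c b v (hP2 b c u h387) h737).2 (hP2 b v c h658))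
                  · exact hne_aw (hP3 a w u (hP4 v w u a (hP2 u w v h738) h732).2 h723)
                · rcases hC_bcw with h742 | h746 | h748
                  · exact hT (Or.inr (Or.inr (hP2 b c a (hP4 b w a c (hP2 a w b h720) h742).1)))
                  · exact hT (Or.inl (hP2 c b a (hP4 c w a b (hP2 a w c h740) h746).1))
                  · rcases hC_uvw with h751 | h756 | h759
                    · have h753 : btw c v w := (hP4 u v w c h751 (hP2 v c u h660)).2
                      have h754 : btw v w a := (hP4 c w a v (hP2 a w c h740) h753).2
                      have h755 : btw v w b := (hP4 u w b v (hP2 b w u h722) h751).2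
                      exact (hne_vw).symm (hP3 w v a (hP4 b v a w (hP2 a v b h529) (hP2 v w b h755)).2 h754)
                    · exact hne_au (hP3 a u w (hP4 v u w a h756 h532).2 (hP2 w a u h723))
                    · have h761 : btw w v b := (hP4 u v b w (hP2 b v u h531) h759).2
                      have h762 : btw v w a := (hP4 b w a v (hP2 a w b h720) (hP2 w v b h761)).2
                      have h763 : btw v w c := (hP4 b w c v h748 (hP2 w v b h761)).2
                      exact (hne_vw).symm (hP3 w v a (hP4 c v a w (hP2 a v c h652) (hP2 v w c h763)).2 h762)
    · exact hT (Or.inl (hP4 u b c a (hP2 c b u h764) (hP2 b a u h385)).2)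
    · exact hT (Or.inr (Or.inl (hP4 b u c a h767 h385).1))
  · rcases hC_acu with h771 | h773 | h1152
    · exact hT (Or.inr (Or.inr (hP4 a u b c h769 h771).1))
    · rcases hC_bcu with h775 | h777 | h1150
      · exact hT (Or.inr (Or.inr (hP2 b c a (hP4 b u a c (hP2 a u b h769) h775).1)))
      · rcases hC_abv with h779 | h899 | h1021
        · have h782 : btw u b v := (hP4 a b v u h779 h769).2
          rcases hC_acv with h783 | h894 | h897
          · rcases hC_bcv with h785 | h787 | h789
            · exact hT (Or.inl (hP2 c b a (hP4 v b a c (hP2 a b v h779) (hP2 b c v h785)).2))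
            · exact hT (Or.inr (Or.inr (hP2 b c a (hP4 v c a b (hP2 a c v h783) (hP2 c b v h787)).2)))
            · have h791 : btw c v u := (hP4 c b u v h777 (hP2 b v c h789)).1
              rcases hC_abw with h792 | h826 | h849
              · rcases hC_acw with h796 | h819 | h822
                · rcases hC_avw with h798 | h810 | h813
                  · have h800 : btw c v w := (hP4 a v w c h798 h783).2
                    have h801 : btw b v w := (hP4 a v w b h798 h779).2
                    rcases hC_bcw with h803 | h805 | h807
                    · exact (hne_cv).symm (hP3 v c b (hP4 w c b v (hP2 b c w h803) (hP2 c v w h800)).2 (hP2 b v c h789))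
                    · exact (hne_bv).symm (hP3 v b c (hP4 w b c v (hP2 c b w h805) (hP2 b v w h801)).2 h789)
                    · exact hne_vw (hP3 v w b (hP4 c w b v (hP2 b w c h807) h800).2 (hP2 b v w h801))
                  · exact (hne_ab).symm (hP3 b a v (hP4 w a v b (hP2 v a w h810) (hP2 a b w h792)).2 h779)
                  · have h815 : btw c w v := (hP4 a w v c h813 h796).2
                    have h816 : btw b w v := (hP4 a w v b h813 h792).2
                    exact (hne_vw).symm (hP3 w v b (hP4 c v b w (hP2 b v c h789) h815).2 (hP2 b w v h816))
                · exact hT (Or.inr (Or.inl (hP4 w a c b (hP2 c a w h819) (hP2 a b w h792)).2))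
                · exact hT (Or.inl (hP4 a w c b h822 h792).1)
              · have h828 : btw b u w := (hP4 b a w u h826 (hP2 a u b h769)).1
                rcases hC_bcw with h830 | h841 | h844
                · have h832 : btw b v w := (hP4 b c w v h830 h789).1
                  have h833 : btw v c w := (hP4 b c w v h830 h789).2
                  rcases hC_uvw with h834 | h837 | h839
                  · exact (hne_bu).symm (hP3 u b w (hP4 u v w b h834 h782).1 h828)
                  · exact (hne_bv).symm (hP3 v b w (hP4 v u w b h837 (hP2 u b v h782)).1 h832)
                  · exact (hne_cv).symm (hP3 v c u (hP4 v w u c (hP2 u w v h839) h833).1 h791)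
                · exact hT (Or.inl (hP4 w b c a (hP2 c b w h841) (hP2 b a w h826)).2)
                · exact hne_bu (hP3 b u c (hP4 b w c u h844 h828).1 (hP2 c b u h777))
              · have h852 : btw w b v := (hP4 a b v w h779 h849).2
                rcases hC_cuw with h853 | h862 | h866
                · have h856 : btw b u w := (hP4 c u w b h853 h777).2
                  have h857 : btw u w a := (hP4 b w a u (hP2 a w b h849) h856).2
                  exact hne_uw (hP3 u w c (hP4 u a c w (hP2 c a u h773) h857).1 (hP2 c u w h853))
                · have h865 : btw b c w := (hP4 u c w b h862 (hP2 c b u h777)).2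
                  exact hne_bv (hP3 b v w (hP4 b c w v h865 h789).1 (hP2 w b v h852))
                · rcases hC_acw with h868 | h870 | h881
                  · exact hT (Or.inr (Or.inr (hP4 a w b c h849 h868).1))
                  · have h872 : btw a w u := (hP4 c w u a h866 h870).2
                    have h873 : btw w u b := (hP4 a u b w h769 h872).2
                    rcases hC_bcw with h875 | h877 | h879
                    · exact (hne_aw).symm (hP3 w a b (hP4 w c b a (hP2 b c w h875) (hP2 c a w h870)).1 h849)
                    · exact (hne_uw).symm (hP3 w u c (hP4 w b c u (hP2 c b w h877) h873).1 (hP2 c w u h866))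
                    · exact hT (Or.inr (Or.inl (hP2 c a b (hP4 c w b a (hP2 b w c h879) h870).1)))
                  · have h883 : btw w c v := (hP4 a c v w h783 h881).2
                    have h884 : btw w a u := (hP4 c a u w h773 (hP2 a w c h881)).2
                    rcases hC_uvw with h885 | h887 | h891
                    · exact (hne_cw).symm (hP3 w c u (hP4 w v u c (hP2 u v w h885) h883).1 h866)
                    · have h890 : btw b u w := (hP4 v u w b h887 (hP2 u b v h782)).2
                      exact (hne_aw).symm (hP3 w a b (hP4 w u b a (hP2 b u w h890) h884).1 h849)
                    · exact (hne_cv).symm (hP3 v c u (hP4 v w u c (hP2 u w v h891) (hP2 w c v h883)).1 h791)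
          · exact hT (Or.inr (Or.inl (hP4 v a c b (hP2 c a v h894) (hP2 a b v h779)).2))
          · exact hT (Or.inl (hP4 a v c b h897 h779).1)
        · have h901 : btw b u v := (hP4 b a v u h899 (hP2 a u b h769)).1
          have h902 : btw u a v := (hP4 b a v u h899 (hP2 a u b h769)).2
          rcases hC_bcv with h903 | h1016 | h1019
          · rcases hC_acv with h905 | h907 | h909
            · exact hT (Or.inr (Or.inl (hP2 c a b (hP4 v a b c (hP2 b a v h899) (hP2 a c v h905)).2)))
            · exact hT (Or.inr (Or.inr (hP4 v c b a (hP2 b c v h903) (hP2 c a v h907)).2))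
            · have h911 : btw c v u := (hP4 c a u v h773 (hP2 a v c h909)).1
              rcases hC_abw with h912 | h934 | h972
              · have h914 : btw a u w := (hP4 a b w u h912 h769).1
                rcases hC_acw with h916 | h927 | h932
                · have h918 : btw a v w := (hP4 a c w v h916 h909).1
                  have h919 : btw v c w := (hP4 a c w v h916 h909).2
                  rcases hC_uvw with h920 | h923 | h925
                  · have h922 : btw w c u := (hP4 w v u c (hP2 u v w h920) (hP2 v c w h919)).1
                    exact (hne_au).symm (hP3 u a w (hP4 u c w a (hP2 w c u h922) (hP2 c a u h773)).1 h914)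
                  · exact (hne_av).symm (hP3 v a w (hP4 v u w a h923 (hP2 u a v h902)).1 h918)
                  · exact (hne_cv).symm (hP3 v c u (hP4 v w u c (hP2 u w v h925) h919).1 h911)
                · exact hT (Or.inr (Or.inl (hP4 w a c b (hP2 c a w h927) (hP2 a b w h912)).2))
                · exact hT (Or.inl (hP4 a w c b h932 h912).1)
              · have h936 : btw b u w := (hP4 b a w u h934 (hP2 a u b h769)).1
                rcases hC_bcw with h938 | h962 | h965
                · rcases hC_acw with h940 | h942 | h946
                  · exact hT (Or.inr (Or.inl (hP2 c a b (hP4 w a b c (hP2 b a w h934) (hP2 a c w h940)).2)))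
                  · exact hT (Or.inr (Or.inr (hP4 w c b a (hP2 b c w h938) (hP2 c a w h942)).2))
                  · have h948 : btw c w u := (hP4 c a u w h773 (hP2 a w c h946)).1
                    rcases hC_bvw with h949 | h954 | h957
                    · have h952 : btw c v w := (hP4 b v w c h949 h903).2
                      have h953 : btw u v w := (hP4 b v w u h949 h901).2
                      exact hne_vw (hP3 v w c (hP4 u w c v (hP2 c w u h948) h953).2 (hP2 c v w h952))
                    · exact hne_ab (hP3 a b w (hP4 v b w a h954 (hP2 b a v h899)).2 h934)
                    · have h960 : btw c w v := (hP4 b w v c h957 h938).2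
                      have h961 : btw u w v := (hP4 b w v u h957 h936).2
                      exact (hne_vw).symm (hP3 w v c (hP4 u v c w (hP2 c v u h911) h961).2 (hP2 c w v h960))
                · exact hT (Or.inl (hP4 w b c a (hP2 c b w h962) (hP2 b a w h934)).2)
                · exact hne_bu (hP3 b u c (hP4 b w c u h965 h936).1 (hP2 c b u h777))
              · have h974 : btw b w v := (hP4 b a v w h899 (hP2 a w b h972)).1
                have h975 : btw w a v := (hP4 b a v w h899 (hP2 a w b h972)).2
                rcases hC_cuw with h976 | h985 | h989
                · have h979 : btw b u w := (hP4 c u w b h976 h777).2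
                  have h980 : btw u w a := (hP4 b w a u (hP2 a w b h972) h979).2
                  exact hne_uw (hP3 u w c (hP4 u a c w (hP2 c a u h773) h980).1 (hP2 c u w h976))
                · have h988 : btw b c w := (hP4 u c w b h985 (hP2 c b u h777)).2
                  exact hT (Or.inr (Or.inr (hP2 b c a (hP4 b w a c (hP2 a w b h972) h988).1)))
                · rcases hC_acw with h991 | h995 | h1007
                  · exact hne_av (hP3 a v w (hP4 a c w v h991 h909).1 (hP2 w a v h975))
                  · have h997 : btw c v w := (hP4 c a w v h995 (hP2 a v c h909)).1
                    have h999 : btw v w u := (hP4 c w u v h989 h997).2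
                    have h1000 : btw w u b := (hP4 v u b w (hP2 b u v h901) h999).2
                    rcases hC_bcw with h1001 | h1003 | h1005
                    · exact (hne_vw).symm (hP3 w v b (hP4 w c b v (hP2 b c w h1001) (hP2 c v w h997)).1 (hP2 b w v h974))
                    · exact (hne_uw).symm (hP3 w u c (hP4 w b c u (hP2 c b w h1003) h1000).1 (hP2 c w u h989))
                    · exact hT (Or.inr (Or.inl (hP2 c a b (hP4 c w b a (hP2 b w c h1005) h995).1)))
                  · have h1009 : btw w a u := (hP4 c a u w h773 (hP2 a w c h1007)).2
                    rcases hC_uvw with h1010 | h1012 | h1014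
                    · exact hne_av (hP3 a v u (hP4 w v u a (hP2 u v w h1010) h975).2 (hP2 u a v h902))
                    · exact hne_au (hP3 a u w (hP4 v u w a h1012 (hP2 u a v h902)).2 (hP2 w a u h1009))
                    · exact hne_aw (hP3 a w u (hP4 v w u a (hP2 u w v h1014) (hP2 w a v h975)).2 h1009)
          · exact hT (Or.inl (hP4 v b c a (hP2 c b v h1016) (hP2 b a v h899)).2)
          · exact hT (Or.inr (Or.inl (hP4 b v c a h1019 h899).1))
        · rcases hC_cuv with h1023 | h1028 | h1034
          · have h1026 : btw b u v := (hP4 c u v b h1023 h777).2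
            have h1027 : btw u v a := (hP4 b v a u (hP2 a v b h1021) h1026).2
            exact hne_uv (hP3 u v c (hP4 u a c v (hP2 c a u h773) h1027).1 (hP2 c u v h1023))
          · have h1031 : btw a c v := (hP4 u c v a h1028 (hP2 c a u h773)).2
            exact hT (Or.inr (Or.inr (hP4 a v b c h1021 h1031).1))
          · rcases hC_acv with h1036 | h1038 | h1049
            · exact hT (Or.inr (Or.inr (hP4 a v b c h1021 h1036).1))
            · have h1040 : btw a v u := (hP4 c v u a h1034 h1038).2
              have h1041 : btw v u b := (hP4 a u b v h769 h1040).2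
              rcases hC_bcv with h1042 | h1044 | h1046
              · exact hT (Or.inr (Or.inr (hP2 b c a (hP4 b v a c (hP2 a v b h1021) h1042).1)))
              · exact (hne_uv).symm (hP3 v u c (hP4 v b c u (hP2 c b v h1044) h1041).1 (hP2 c v u h1034))
              · exact hne_bu (hP3 b u c (hP4 b v c u h1046 (hP2 v u b h1041)).1 (hP2 c b u h777))
            · have h1051 : btw v a u := (hP4 c a u v h773 (hP2 a v c h1049)).2
              rcases hC_bcv with h1052 | h1054 | h1056
              · exact hT (Or.inr (Or.inr (hP2 b c a (hP4 b v a c (hP2 a v b h1021) h1052).1)))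
              · exact hT (Or.inl (hP2 c b a (hP4 c v a b (hP2 a v c h1049) h1054).1))
              · have h1058 : btw v b u := (hP4 c b u v h777 (hP2 b v c h1056)).2
                rcases hC_abw with h1059 | h1073 | h1085
                · have h1061 : btw a v w := (hP4 a b w v h1059 h1021).1
                  have h1062 : btw v b w := (hP4 a b w v h1059 h1021).2
                  have h1063 : btw a u w := (hP4 a b w u h1059 h769).1
                  have h1064 : btw u b w := (hP4 a b w u h1059 h769).2
                  rcases hC_uvw with h1065 | h1069 | h1071
                  · have h1067 : btw v u a := (hP4 w u a v (hP2 a u w h1063) (hP2 u v w h1065)).2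
                    exact (hne_au).symm (hP3 u a u (hP4 v a u u h1051 h1067).2 (hP2 u u a (hP1 u a)))
                  · exact (hne_av).symm (hP3 v a w (hP4 v u w a h1069 h1051).1 h1061)
                  · exact hne_bw (hP3 b w u (hP4 v w u b (hP2 u w v h1071) h1062).2 (hP2 u b w h1064))
                · have h1076 : btw u a w := (hP4 b a w u h1073 (hP2 a u b h769)).2
                  have h1078 : btw v a w := (hP4 b a w v h1073 (hP2 a v b h1021)).2
                  rcases hC_uvw with h1079 | h1081 | h1083
                  · exact hne_av (hP3 a v u (hP4 w v u a (hP2 u v w h1079) (hP2 v a w h1078)).2 h1051)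
                  · exact hne_au (hP3 a u w (hP4 v u w a h1081 h1051).2 h1076)
                  · exact hne_aw (hP3 a w u (hP4 v w u a (hP2 u w v h1083) h1078).2 (hP2 u a w h1076))
                · rcases hC_cuw with h1087 | h1097 | h1103
                  · have h1090 : btw b u w := (hP4 c u w b h1087 h777).2
                    have h1091 : btw u w a := (hP4 b w a u (hP2 a w b h1085) h1090).2
                    exact hne_uw (hP3 u w c (hP4 u a c w (hP2 c a u h773) h1091).1 (hP2 c u w h1087))
                  · have h1100 : btw b c w := (hP4 u c w b h1097 (hP2 c b u h777)).2
                    exact hT (Or.inr (Or.inr (hP2 b c a (hP4 b w a c (hP2 a w b h1085) h1100).1)))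
                  · rcases hC_uvw with h1105 | h1114 | h1120
                    · have h1107 : btw v w c := (hP4 u w c v (hP2 c w u h1103) h1105).2
                      have h1109 : btw b v w := (hP4 u v w b h1105 (hP2 v b u h1058)).2
                      have h1112 : btw w v a := (hP4 c v a w (hP2 a v c h1049) (hP2 v w c h1107)).2
                      exact hne_vw (hP3 v w b (hP4 a w b v h1085 (hP2 w v a h1112)).2 (hP2 b v w h1109))
                    · have h1117 : btw a u w := (hP4 v u w a h1114 h1051).2
                      have h1119 : btw b u w := (hP4 v u w b h1114 h1058).2
                      exact hne_uw (hP3 u w a (hP4 b w a u (hP2 a w b h1085) h1119).2 (hP2 a u w h1117))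
                    · have h1122 : btw w v c := (hP4 u v c w (hP2 c v u h1034) h1120).2
                      rcases hC_acw with h1123 | h1126 | h1138
                      · exact (hne_cv).symm (hP3 v c a (hP4 w c a v (hP2 a c w h1123) h1122).2 (hP2 a v c h1049))
                      · have h1129 : btw a w u := (hP4 c w u a h1103 h1126).2
                        have h1130 : btw w u b := (hP4 a u b w h769 h1129).2
                        rcases hC_bcw with h1131 | h1134 | h1136
                        · exact (hne_cv).symm (hP3 v c b (hP4 w c b v (hP2 b c w h1131) h1122).2 (hP2 b v c h1056))
                        · exact (hne_uw).symm (hP3 w u c (hP4 w b c u (hP2 c b w h1134) h1130).1 (hP2 c w u h1103))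
                        · exact hT (Or.inr (Or.inl (hP2 c a b (hP4 c w b a (hP2 b w c h1136) h1126).1)))
                      · have h1140 : btw v w a := (hP4 c w a v (hP2 a w c h1138) (hP2 w v c h1122)).2
                        have h1141 : btw w v b := (hP4 a v b w h1021 (hP2 v w a h1140)).2
                        rcases hC_bcw with h1143 | h1145 | h1147
                        · exact (hne_cv).symm (hP3 v c b (hP4 w c b v (hP2 b c w h1143) h1122).2 (hP2 b v c h1056))
                        · exact (hne_bv).symm (hP3 v b c (hP4 w b c v (hP2 c b w h1145) h1141).2 h1056)
                        · exact hne_vw (hP3 v w b (hP4 c w b v (hP2 b w c h1147) (hP2 w v c h1122)).2 h1141)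
      · exact hT (Or.inr (Or.inl (hP2 c a b (hP4 c u b a (hP2 b u c h1150) h773).1)))
    · rcases hC_bcu with h1154 | h1156 | h1158
      · exact hT (Or.inr (Or.inr (hP2 b c a (hP4 b u a c (hP2 a u b h769) h1154).1)))
      · exact hT (Or.inl (hP2 c b a (hP4 c u a b (hP2 a u c h1152) h1156).1))
      · rcases hC_abv with h1160 | h1282 | h1401
        · have h1162 : btw a u v := (hP4 a b v u h1160 h769).1
          have h1163 : btw u b v := (hP4 a b v u h1160 h769).2
          rcases hC_acv with h1164 | h1277 | h1280
          · have h1166 : btw u c v := (hP4 a c v u h1164 h1152).2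
            rcases hC_bcv with h1167 | h1169 | h1171
            · exact hne_bu (hP3 b u v (hP4 b c v u h1167 h1158).1 h1163)
            · exact hne_cu (hP3 c u v (hP4 c b v u h1169 (hP2 b u c h1158)).1 h1166)
            · rcases hC_abw with h1173 | h1207 | h1228
              · have h1175 : btw a u w := (hP4 a b w u h1173 h769).1
                rcases hC_acw with h1177 | h1200 | h1203
                · have h1179 : btw u c w := (hP4 a c w u h1177 h1152).2
                  rcases hC_avw with h1180 | h1191 | h1194
                  · have h1182 : btw c v w := (hP4 a v w c h1180 h1164).2
                    have h1183 : btw w v u := (hP4 w c u v (hP2 u c w h1179) (hP2 c v w h1182)).1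
                    have h1184 : btw b v w := (hP4 u v w b (hP2 w v u h1183) h1163).2
                    rcases hC_bcw with h1185 | h1187 | h1189
                    · exact (hne_cv).symm (hP3 v c b (hP4 w c b v (hP2 b c w h1185) (hP2 c v w h1182)).2 (hP2 b v c h1171))
                    · exact (hne_bv).symm (hP3 v b c (hP4 w b c v (hP2 c b w h1187) (hP2 b v w h1184)).2 h1171)
                    · exact hne_vw (hP3 v w b (hP4 c w b v (hP2 b w c h1189) h1182).2 (hP2 b v w h1184))
                  · exact (hne_ab).symm (hP3 b a v (hP4 w a v b (hP2 v a w h1191) (hP2 a b w h1173)).2 h1160)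
                  · have h1196 : btw c w v := (hP4 a w v c h1194 h1177).2
                    have h1197 : btw b w v := (hP4 a w v b h1194 h1173).2
                    exact (hne_vw).symm (hP3 w v b (hP4 c v b w (hP2 b v c h1171) h1196).2 (hP2 b w v h1197))
                · exact (hne_au).symm (hP3 u a w (hP4 c a w u h1200 (hP2 a u c h1152)).2 h1175)
                · exact hT (Or.inl (hP4 a w c b h1203 h1173).1)
              · have h1209 : btw b u w := (hP4 b a w u h1207 (hP2 a u b h769)).1
                have h1210 : btw u a w := (hP4 b a w u h1207 (hP2 a u b h769)).2
                rcases hC_bcw with h1211 | h1222 | h1225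
                · have h1213 : btw u c w := (hP4 b c w u h1211 h1158).2
                  have h1214 : btw b v w := (hP4 b c w v h1211 h1171).1
                  have h1215 : btw v c w := (hP4 b c w v h1211 h1171).2
                  rcases hC_uvw with h1216 | h1218 | h1220
                  · exact hne_cv (hP3 c v w (hP4 u v w c h1216 h1166).2 h1215)
                  · exact (hne_bv).symm (hP3 v b w (hP4 v u w b h1218 (hP2 u b v h1163)).1 h1214)
                  · exact hne_cw (hP3 c w u (hP4 v w u c (hP2 u w v h1220) h1215).2 (hP2 u c w h1213))
                · exact hT (Or.inl (hP4 w b c a (hP2 c b w h1222) (hP2 b a w h1207)).2)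
                · have h1227 : btw u w c := (hP4 b w c u h1225 h1209).2
                  exact (hne_au).symm (hP3 u a c (hP4 u w c a h1227 h1210).1 h1152)
              · have h1231 : btw w b v := (hP4 a b v w h1160 h1228).2
                rcases hC_acw with h1232 | h1236 | h1251
                · exact hT (Or.inr (Or.inr (hP4 a w b c h1228 h1232).1))
                · have h1238 : btw c u w := (hP4 c a w u h1236 (hP2 a u c h1152)).1
                  have h1239 : btw u a w := (hP4 c a w u h1236 (hP2 a u c h1152)).2
                  rcases hC_uvw with h1240 | h1242 | h1247
                  · exact (hne_cu).symm (hP3 u c w (hP4 u v w c h1240 h1166).1 h1238)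
                  · have h1245 : btw b u w := (hP4 v u w b h1242 (hP2 u b v h1163)).2
                    exact (hne_aw).symm (hP3 w a b (hP4 w u b a (hP2 b u w h1245) (hP2 u a w h1239)).1 h1228)
                  · have h1250 : btw w u a := (hP4 v u a w (hP2 a u v h1162) (hP2 u w v h1247)).2
                    exact (hne_au).symm (hP3 u a u (hP4 w a u u (hP2 u a w h1239) h1250).2 (hP2 u u a (hP1 u a)))
                · have h1253 : btw w c v := (hP4 a c v w h1164 h1251).2
                  rcases hC_bcw with h1254 | h1259 | h1262
                  · exact hne_bv (hP3 b v w (hP4 b c w v h1254 h1171).1 (hP2 w b v h1231))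
                  · exact hT (Or.inl (hP2 c b a (hP4 c w a b (hP2 a w c h1251) h1259).1))
                  · rcases hC_uvw with h1264 | h1267 | h1272
                    · exact hne_cv (hP3 c v w (hP4 u v w c h1264 h1166).2 (hP2 w c v h1253))
                    · have h1270 : btw b u w := (hP4 v u w b h1267 (hP2 u b v h1163)).2
                      have h1271 : btw c u w := (hP4 v u w c h1267 (hP2 u c v h1166)).2
                      exact hne_uw (hP3 u w c (hP4 b w c u h1262 h1270).2 (hP2 c u w h1271))
                    · have h1274 : btw b w u := (hP4 v w u b (hP2 u w v h1272) (hP2 w b v h1231)).2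
                      have h1275 : btw c w u := (hP4 v w u c (hP2 u w v h1272) (hP2 w c v h1253)).2
                      exact (hne_uw).symm (hP3 w u c (hP4 b u c w h1158 h1274).2 (hP2 c w u h1275))
          · exact hT (Or.inr (Or.inl (hP4 v a c b (hP2 c a v h1277) (hP2 a b v h1160)).2))
          · exact hT (Or.inl (hP4 a v c b h1280 h1160).1)
        · have h1284 : btw b u v := (hP4 b a v u h1282 (hP2 a u b h769)).1
          have h1285 : btw u a v := (hP4 b a v u h1282 (hP2 a u b h769)).2
          rcases hC_bcv with h1286 | h1396 | h1399
          · have h1288 : btw u c v := (hP4 b c v u h1286 h1158).2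
            rcases hC_acv with h1289 | h1291 | h1294
            · exact hne_au (hP3 a u v (hP4 a c v u h1289 h1152).1 h1285)
            · exact hT (Or.inr (Or.inr (hP4 v c b a (hP2 b c v h1286) (hP2 c a v h1291)).2))
            · rcases hC_abw with h1296 | h1316 | h1351
              · have h1298 : btw a u w := (hP4 a b w u h1296 h769).1
                rcases hC_acw with h1300 | h1311 | h1314
                · have h1302 : btw u c w := (hP4 a c w u h1300 h1152).2
                  have h1303 : btw a v w := (hP4 a c w v h1300 h1294).1
                  have h1304 : btw v c w := (hP4 a c w v h1300 h1294).2
                  rcases hC_uvw with h1305 | h1307 | h1309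
                  · exact hne_cv (hP3 c v w (hP4 u v w c h1305 h1288).2 h1304)
                  · exact (hne_av).symm (hP3 v a w (hP4 v u w a h1307 (hP2 u a v h1285)).1 h1303)
                  · exact hne_cw (hP3 c w u (hP4 v w u c (hP2 u w v h1309) h1304).2 (hP2 u c w h1302))
                · exact (hne_au).symm (hP3 u a w (hP4 c a w u h1311 (hP2 a u c h1152)).2 h1298)
                · exact hT (Or.inl (hP4 a w c b h1314 h1296).1)
              · have h1318 : btw b u w := (hP4 b a w u h1316 (hP2 a u b h769)).1
                have h1319 : btw u a w := (hP4 b a w u h1316 (hP2 a u b h769)).2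
                rcases hC_bcw with h1320 | h1342 | h1345
                · have h1322 : btw u c w := (hP4 b c w u h1320 h1158).2
                  rcases hC_acw with h1323 | h1325 | h1327
                  · exact hT (Or.inr (Or.inl (hP2 c a b (hP4 w a b c (hP2 b a w h1316) (hP2 a c w h1323)).2)))
                  · exact hne_cu (hP3 c u w (hP4 c a w u h1325 (hP2 a u c h1152)).1 h1322)
                  · rcases hC_bvw with h1329 | h1334 | h1337
                    · have h1331 : btw a v w := (hP4 b v w a h1329 h1282).2
                      have h1332 : btw c v w := (hP4 b v w c h1329 h1286).2
                      exact hne_vw (hP3 v w a (hP4 c w a v (hP2 a w c h1327) h1332).2 (hP2 a v w h1331))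
                    · exact hne_ab (hP3 a b w (hP4 v b w a h1334 (hP2 b a v h1282)).2 h1316)
                    · have h1339 : btw a w v := (hP4 b w v a h1337 h1316).2
                      have h1340 : btw c w v := (hP4 b w v c h1337 h1320).2
                      exact (hne_vw).symm (hP3 w v a (hP4 c v a w (hP2 a v c h1294) h1340).2 (hP2 a w v h1339))
                · exact hT (Or.inl (hP4 w b c a (hP2 c b w h1342) (hP2 b a w h1316)).2)
                · have h1349 : btw u w c := (hP4 b w c u h1345 h1318).2
                  exact (hne_au).symm (hP3 u a c (hP4 u w c a h1349 h1319).1 h1152)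
              · have h1354 : btw w a v := (hP4 b a v w h1282 (hP2 a w b h1351)).2
                rcases hC_acw with h1355 | h1359 | h1371
                · have h1358 : btw c a v := (hP4 w a v c h1354 (hP2 a c w h1355)).2
                  exact hne_cu (hP3 c u v (hP4 c a v u h1358 (hP2 a u c h1152)).1 h1288)
                · have h1362 : btw u a w := (hP4 c a w u h1359 (hP2 a u c h1152)).2
                  have h1363 : btw c v w := (hP4 c a w v h1359 (hP2 a v c h1294)).1
                  rcases hC_uvw with h1364 | h1366 | h1369
                  · exact hne_av (hP3 a v u (hP4 w v u a (hP2 u v w h1364) h1354).2 (hP2 u a v h1285))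
                  · have h1368 : btw u v c := (hP4 w v c u (hP2 c v w h1363) (hP2 v u w h1366)).2
                    exact (hne_cv).symm (hP3 v c v (hP4 u c v v h1288 h1368).2 (hP2 v v c (hP1 v c)))
                  · exact hne_aw (hP3 a w u (hP4 v w u a (hP2 u w v h1369) (hP2 w a v h1354)).2 (hP2 u a w h1362))
                · rcases hC_bcw with h1373 | h1378 | h1380
                  · exact hT (Or.inr (Or.inr (hP2 b c a (hP4 b w a c (hP2 a w b h1351) h1373).1)))
                  · exact hT (Or.inl (hP2 c b a (hP4 c w a b (hP2 a w c h1371) h1378).1))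
                  · have h1382 : btw w c v := (hP4 b c v w h1286 h1380).2
                    rcases hC_uvw with h1383 | h1386 | h1391
                    · exact hne_av (hP3 a v u (hP4 w v u a (hP2 u v w h1383) h1354).2 (hP2 u a v h1285))
                    · have h1388 : btw a u w := (hP4 v u w a h1386 (hP2 u a v h1285)).2
                      have h1389 : btw c u w := (hP4 v u w c h1386 (hP2 u c v h1288)).2
                      exact hne_uw (hP3 u w a (hP4 c w a u (hP2 a w c h1371) h1389).2 (hP2 a u w h1388))
                    · have h1393 : btw a w u := (hP4 v w u a (hP2 u w v h1391) (hP2 w a v h1354)).2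
                      have h1394 : btw c w u := (hP4 v w u c (hP2 u w v h1391) (hP2 w c v h1382)).2
                      exact (hne_uw).symm (hP3 w u a (hP4 c u a w (hP2 a u c h1152) h1394).2 (hP2 a w u h1393))
          · exact (hne_bu).symm (hP3 u b v (hP4 c b v u h1396 (hP2 b u c h1158)).2 h1284)
          · exact hT (Or.inr (Or.inl (hP4 b v c a h1399 h1282).1))
        · rcases hC_acv with h1403 | h1407 | h1506
          · exact hT (Or.inr (Or.inr (hP4 a v b c h1401 h1403).1))
          · have h1409 : btw c u v := (hP4 c a v u h1407 (hP2 a u c h1152)).1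
            have h1410 : btw u a v := (hP4 c a v u h1407 (hP2 a u c h1152)).2
            rcases hC_bcv with h1411 | h1414 | h1504
            · exact (hne_cu).symm (hP3 u c b (hP4 v c b u (hP2 b c v h1411) (hP2 c u v h1409)).2 (hP2 b u c h1158))
            · have h1416 : btw u b v := (hP4 c b v u h1414 (hP2 b u c h1158)).2
              rcases hC_abw with h1417 | h1431 | h1443
              · have h1419 : btw a v w := (hP4 a b w v h1417 h1401).1
                have h1420 : btw v b w := (hP4 a b w v h1417 h1401).2
                have h1421 : btw a u w := (hP4 a b w u h1417 h769).1
                have h1422 : btw u b w := (hP4 a b w u h1417 h769).2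
                rcases hC_uvw with h1423 | h1427 | h1429
                · have h1425 : btw v u a := (hP4 w u a v (hP2 a u w h1421) (hP2 u v w h1423)).2
                  exact (hne_au).symm (hP3 u a u (hP4 v a u u (hP2 u a v h1410) h1425).2 (hP2 u u a (hP1 u a)))
                · exact (hne_av).symm (hP3 v a w (hP4 v u w a h1427 (hP2 u a v h1410)).1 h1419)
                · exact hne_bw (hP3 b w u (hP4 v w u b (hP2 u w v h1429) h1420).2 (hP2 u b w h1422))
              · have h1434 : btw u a w := (hP4 b a w u h1431 (hP2 a u b h769)).2
                have h1436 : btw v a w := (hP4 b a w v h1431 (hP2 a v b h1401)).2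
                rcases hC_uvw with h1437 | h1439 | h1441
                · exact hne_av (hP3 a v u (hP4 w v u a (hP2 u v w h1437) (hP2 v a w h1436)).2 (hP2 u a v h1410))
                · exact hne_au (hP3 a u w (hP4 v u w a h1439 (hP2 u a v h1410)).2 h1434)
                · exact hne_aw (hP3 a w u (hP4 v w u a (hP2 u w v h1441) h1436).2 (hP2 u a w h1434))
              · rcases hC_cvw with h1445 | h1453 | h1459
                · have h1448 : btw a v w := (hP4 c v w a h1445 h1407).2
                  have h1450 : btw b v w := (hP4 c v w b h1445 h1414).2
                  exact hne_vw (hP3 v w a (hP4 b w a v (hP2 a w b h1443) h1450).2 (hP2 a v w h1448))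
                · have h1456 : btw b c w := (hP4 v c w b h1453 (hP2 c b v h1414)).2
                  exact hT (Or.inr (Or.inr (hP2 b c a (hP4 b w a c (hP2 a w b h1443) h1456).1)))
                · rcases hC_uvw with h1461 | h1467 | h1474
                  · have h1464 : btw b v w := (hP4 u v w b h1461 h1416).2
                    have h1466 : btw a v w := (hP4 u v w a h1461 h1410).2
                    exact hne_vw (hP3 v w b (hP4 a w b v h1443 h1466).2 (hP2 b v w h1464))
                  · have h1470 : btw a u w := (hP4 v u w a h1467 (hP2 u a v h1410)).2
                    have h1472 : btw b u w := (hP4 v u w b h1467 (hP2 u b v h1416)).2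
                    exact hne_uw (hP3 u w a (hP4 b w a u (hP2 a w b h1443) h1472).2 (hP2 a u w h1470))
                  · have h1476 : btw w u c := (hP4 v u c w (hP2 c u v h1409) (hP2 u w v h1474)).2
                    rcases hC_acw with h1477 | h1480 | h1492
                    · exact (hne_cu).symm (hP3 u c a (hP4 w c a u (hP2 a c w h1477) h1476).2 (hP2 a u c h1152))
                    · have h1483 : btw a w v := (hP4 c w v a h1459 h1480).2
                      have h1484 : btw w v b := (hP4 a v b w h1401 h1483).2
                      rcases hC_bcw with h1485 | h1487 | h1490
                      · exact (hne_aw).symm (hP3 w a b (hP4 w c b a (hP2 b c w h1485) (hP2 c a w h1480)).1 h1443)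
                      · have h1489 : btw b w v := (hP4 c w v b h1459 h1487).2
                        exact (hne_vw).symm (hP3 w v w (hP4 b v w w (hP2 w v b h1484) h1489).2 (hP2 w w v (hP1 w v)))
                      · exact hT (Or.inr (Or.inl (hP2 c a b (hP4 c w b a (hP2 b w c h1490) h1480).1)))
                    · have h1495 : btw u w a := (hP4 c w a u (hP2 a w c h1492) (hP2 w u c h1476)).2
                      have h1496 : btw w u b := (hP4 a u b w h769 (hP2 u w a h1495)).2
                      rcases hC_bcw with h1497 | h1499 | h1502
                      · exact (hne_cu).symm (hP3 u c b (hP4 w c b u (hP2 b c w h1497) h1476).2 (hP2 b u c h1158))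
                      · exact (hne_bu).symm (hP3 u b c (hP4 w b c u (hP2 c b w h1499) h1496).2 h1158)
                      · exact hne_uw (hP3 u w b (hP4 c w b u (hP2 b w c h1502) (hP2 w u c h1476)).2 h1496)
            · exact hT (Or.inr (Or.inl (hP2 c a b (hP4 c v b a (hP2 b v c h1504) h1407).1)))
          · rcases hC_bcv with h1508 | h1512 | h1516
            · exact hT (Or.inr (Or.inr (hP2 b c a (hP4 b v a c (hP2 a v b h1401) h1508).1)))
            · exact hT (Or.inl (hP2 c b a (hP4 c v a b (hP2 a v c h1506) h1512).1))
            · rcases hC_auv with h1518 | h1522 | h1626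
              · have h1520 : btw u v b := (hP4 a v b u h1401 h1518).2
                have h1521 : btw u v c := (hP4 a v c u h1506 h1518).2
                exact (hne_uv).symm (hP3 v u b (hP4 c u b v (hP2 b u c h1158) (hP2 u v c h1521)).2 h1520)
              · rcases hC_buv with h1524 | h1526 | h1622
                · exact (hne_av).symm (hP3 v a b (hP4 v u b a (hP2 b u v h1524) (hP2 u a v h1522)).1 h1401)
                · rcases hC_cuv with h1528 | h1530 | h1619
                  · exact (hne_av).symm (hP3 v a c (hP4 v u c a (hP2 c u v h1528) (hP2 u a v h1522)).1 h1506)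
                  · rcases hC_abw with h1532 | h1549 | h1561
                    · have h1534 : btw a v w := (hP4 a b w v h1532 h1401).1
                      have h1535 : btw v b w := (hP4 a b w v h1532 h1401).2
                      have h1536 : btw a u w := (hP4 a b w u h1532 h769).1
                      have h1537 : btw u b w := (hP4 a b w u h1532 h769).2
                      rcases hC_uvw with h1538 | h1545 | h1547
                      · have h1543 : btw v u a := (hP4 w u a v (hP2 a u w h1536) (hP2 u v w h1538)).2
                        exact (hne_au).symm (hP3 u a u (hP4 v a u u (hP2 u a v h1522) h1543).2 (hP2 u u a (hP1 u a)))
                      · exact (hne_av).symm (hP3 v a w (hP4 v u w a h1545 (hP2 u a v h1522)).1 h1534)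
                      · exact hne_bw (hP3 b w u (hP4 v w u b (hP2 u w v h1547) h1535).2 (hP2 u b w h1537))
                    · have h1552 : btw u a w := (hP4 b a w u h1549 (hP2 a u b h769)).2
                      have h1554 : btw v a w := (hP4 b a w v h1549 (hP2 a v b h1401)).2
                      rcases hC_uvw with h1555 | h1557 | h1559
                      · exact hne_av (hP3 a v u (hP4 w v u a (hP2 u v w h1555) (hP2 v a w h1554)).2 (hP2 u a v h1522))
                      · exact hne_au (hP3 a u w (hP4 v u w a h1557 (hP2 u a v h1522)).2 h1552)
                      · exact hne_aw (hP3 a w u (hP4 v w u a (hP2 u w v h1559) h1554).2 (hP2 u a w h1552))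
                    · rcases hC_uvw with h1563 | h1571 | h1579
                      · have h1568 : btw b v w := (hP4 u v w b h1563 h1526).2
                        have h1570 : btw a v w := (hP4 u v w a h1563 h1522).2
                        exact hne_vw (hP3 v w b (hP4 a w b v h1561 h1570).2 (hP2 b v w h1568))
                      · have h1574 : btw a u w := (hP4 v u w a h1571 (hP2 u a v h1522)).2
                        have h1576 : btw b u w := (hP4 v u w b h1571 (hP2 u b v h1526)).2
                        exact hne_uw (hP3 u w a (hP4 b w a u (hP2 a w b h1561) h1576).2 (hP2 a u w h1574))
                      · rcases hC_acw with h1581 | h1586 | h1592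
                        · have h1584 : btw u c w := (hP4 a c w u h1581 h1152).2
                          have h1585 : btw c w v := (hP4 u w v c h1579 h1584).2
                          exact hne_cw (hP3 c w a (hP4 c v a w (hP2 a v c h1506) h1585).1 (hP2 a c w h1581))
                        · have h1589 : btw u a w := (hP4 c a w u h1586 (hP2 a u c h1152)).2
                          have h1591 : btw v a w := (hP4 c a w v h1586 (hP2 a v c h1506)).2
                          exact hne_aw (hP3 a w u (hP4 v w u a (hP2 u w v h1579) h1591).2 (hP2 u a w h1589))
                        · rcases hC_bcw with h1594 | h1600 | h1602
                          · exact hT (Or.inr (Or.inr (hP2 b c a (hP4 b w a c (hP2 a w b h1561) h1594).1)))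
                          · exact hT (Or.inl (hP2 c b a (hP4 c w a b (hP2 a w c h1592) h1600).1))
                          · rcases hC_auw with h1604 | h1609 | h1614
                            · have h1606 : btw u w b := (hP4 a w b u h1561 h1604).2
                              have h1607 : btw u w c := (hP4 a w c u h1592 h1604).2
                              exact (hne_uw).symm (hP3 w u c (hP4 b u c w h1158 (hP2 u w b h1606)).2 h1607)
                            · have h1611 : btw a w v := (hP4 u w v a h1579 h1609).2
                              have h1612 : btw w v c := (hP4 a v c w h1506 h1611).2
                              have h1613 : btw v w b := (hP4 c w b v (hP2 b w c h1602) (hP2 w v c h1612)).2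
                              exact (hne_vw).symm (hP3 w v b (hP4 a v b w h1401 h1611).2 h1613)
                            · have h1617 : btw w u b := (hP4 a u b w h769 h1614).2
                              have h1618 : btw w u c := (hP4 a u c w h1152 h1614).2
                              exact hne_uw (hP3 u w c (hP4 b w c u h1602 (hP2 w u b h1617)).2 h1618)
                  · exact (hne_bu).symm (hP3 u b c (hP4 u v c b (hP2 c v u h1619) h1526).1 h1158)
                · have h1624 : btw v u c := (hP4 b u c v h1158 h1622).2
                  have h1625 : btw v u a := (hP4 b u a v (hP2 a u b h769) h1622).2
                  exact hne_uv (hP3 u v a (hP4 c v a u (hP2 a v c h1506) (hP2 v u c h1624)).2 h1625)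
              · have h1628 : btw v u b := (hP4 a u b v h769 h1626).2
                have h1629 : btw v u c := (hP4 a u c v h1152 h1626).2
                exact hne_uv (hP3 u v c (hP4 b v c u h1516 (hP2 v u b h1628)).2 h1629)

section Main
variable {X : Type*} {btw : X → X → X → Prop}

lemma lemL (hB : IsBtw btw) [DecidableEq X] [DecidablePred fun T : Finset X => IsTriangle btw T] (A : Finset X)
    (hA : ∃ T : Finset X, T ⊆ A ∧ IsTriangle btw T) :
    A.card - 4 ≤ (A.powerset.filter (fun T => IsTriangle btw T)).card := by
  classical
  induction A using Finset.strongInduction with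
  | _ A IH =>
  obtain ⟨T₀, hT₀A, hT₀⟩ := hA
  set TS := A.powerset.filter (fun T => IsTriangle btw T) with hTS
  by_cases hcase : ∃ y ∈ A, y ∉ T₀ ∧ ∃ T' ∈ TS, y ∈ T'
  · obtain ⟨y, hyA, hyT₀, T', hT', hyT'⟩ := hcase
    have hsub : A.erase y ⊂ A := Finset.erase_ssubset hyA
    have hT₀sub : T₀ ⊆ A.erase y := Finset.subset_erase.mpr ⟨hT₀A, hyT₀⟩
    have hIH := IH (A.erase y) hsub ⟨T₀, hT₀sub, hT₀⟩
    have hmono : (A.erase y).powerset.filter (fun T => IsTriangle btw T) ⊆ TS := by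
      intro T hT
      simp only [hTS, Finset.mem_filter, Finset.mem_powerset] at hT ⊢
      exact ⟨hT.1.trans (Finset.erase_subset _ _), hT.2⟩
    have hT'mem : T' ∈ TS := hT'
    have hT'notin : T' ∉ (A.erase y).powerset.filter (fun T => IsTriangle btw T) := by
      simp only [Finset.mem_filter, Finset.mem_powerset, Finset.subset_erase]
      intro h
      exact h.1.2 hyT'
    have hlt : ((A.erase y).powerset.filter (fun T => IsTriangle btw T)).card < TS.card :=
      Finset.card_lt_card ⟨hmono, fun h => hT'notin (h hT'mem)⟩
    have hcarde : (A.erase y).card = A.card - 1 := Finset.card_erase_of_mem hyA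
    omega
  · push_neg at hcase
    have hT₀mem : T₀ ∈ TS := by
      simp only [hTS, Finset.mem_filter, Finset.mem_powerset]
      exact ⟨hT₀A, hT₀⟩
    have hone : 1 ≤ TS.card := Finset.card_pos.mpr ⟨T₀, hT₀mem⟩
    by_cases hsmall : A.card ≤ 5
    · omega
    · exfalso
      push_neg at hsmall
      -- extract a,b,c from T₀
      obtain ⟨a, b, c, hab, hac, hbc, hT₀eq⟩ := Finset.card_eq_three.mp hT₀.1
      -- find u v w in A \ T₀
      have hcardAT : 3 ≤ (A \ T₀).card := by
        have := Finset.card_sdiff_of_subset hT₀A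
        have h3 : T₀.card = 3 := hT₀.1
        omega
      obtain ⟨S', hS'sub, hS'card⟩ := Finset.exists_subset_card_eq hcardAT
      obtain ⟨u, v, w, huv, huw, hvw, hS'eq⟩ := Finset.card_eq_three.mp hS'card
      have huA : u ∈ A ∧ u ∉ T₀ := by
        have := hS'sub (by simp [hS'eq] : u ∈ S'); simpa [Finset.mem_sdiff] using this
      have hvA : v ∈ A ∧ v ∉ T₀ := by
        have := hS'sub (by simp [hS'eq] : v ∈ S'); simpa [Finset.mem_sdiff] using this
      have hwA : w ∈ A ∧ w ∉ T₀ := by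
        have := hS'sub (by simp [hS'eq] : w ∈ S'); simpa [Finset.mem_sdiff] using this
      have haA : a ∈ A := hT₀A (by simp [hT₀eq])
      have hbA : b ∈ A := hT₀A (by simp [hT₀eq])
      have hcA : c ∈ A := hT₀A (by simp [hT₀eq])
      have hmemT₀ : ∀ p : X, p ∈ T₀ ↔ (p = a ∨ p = b ∨ p = c) := by
        intro p; simp [hT₀eq]
      have hua : u ≠ a := fun h => huA.2 ((hmemT₀ u).mpr (Or.inl h))
      have hub : u ≠ b := fun h => huA.2 ((hmemT₀ u).mpr (Or.inr (Or.inl h)))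
      have huc : u ≠ c := fun h => huA.2 ((hmemT₀ u).mpr (Or.inr (Or.inr h)))
      have hva : v ≠ a := fun h => hvA.2 ((hmemT₀ v).mpr (Or.inl h))
      have hvb : v ≠ b := fun h => hvA.2 ((hmemT₀ v).mpr (Or.inr (Or.inl h)))
      have hvc : v ≠ c := fun h => hvA.2 ((hmemT₀ v).mpr (Or.inr (Or.inr h)))
      have hwa : w ≠ a := fun h => hwA.2 ((hmemT₀ w).mpr (Or.inl h))
      have hwb : w ≠ b := fun h => hwA.2 ((hmemT₀ w).mpr (Or.inr (Or.inl h)))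
      have hwc : w ≠ c := fun h => hwA.2 ((hmemT₀ w).mpr (Or.inr (Or.inr h)))
      -- every 3-subset of A containing a point outside T₀ is collinear
      have hcol : ∀ p q r : X, p ∈ A → q ∈ A → r ∈ A → p ≠ q → p ≠ r → q ≠ r →
          p ∉ T₀ → CollinearTriple btw p q r := by
        intro p q r hpA hqA hrA hpq hpr hqr hpT₀
        by_contra hct
        have hcard3 : ({p, q, r} : Finset X).card = 3 := by
          rw [Finset.card_insert_of_notMem (by simp [hpq, hpr]),
            Finset.card_insert_of_notMem (by simp [hqr]), Finset.card_singleton]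
        have htri : IsTriangle btw ({p, q, r} : Finset X) :=
          ⟨hcard3, fun h => hct ((collinearSet_iff hB hpq hpr hqr).mp h)⟩
        have hmem : ({p, q, r} : Finset X) ∈ TS := by
          simp only [hTS, Finset.mem_filter, Finset.mem_powerset]
          exact ⟨by intro t ht; simp at ht; rcases ht with rfl | rfl | rfl <;> assumption, htri⟩
        exact hcase p hpA hpT₀ _ hmem (by simp)
      have hTct : ¬ CollinearTriple btw a b c := by
        intro h
        exact hT₀.2 (hT₀eq ▸ (collinearSet_iff hB hab hac hbc).mpr h)
      -- build the 19 collinearity hypotheses and apply lemU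
      exact lemU hB a b c u v w hab hac hua.symm hva.symm hwa.symm hbc hub.symm hvb.symm
        hwb.symm huc.symm hvc.symm hwc.symm huv huw hvw hTct
        (ct_swap2 hB (ct_swap1 hB (hcol u a b huA.1 haA hbA hua hub hab huA.2)))
        (ct_swap2 hB (ct_swap1 hB (hcol v a b hvA.1 haA hbA hva hvb hab hvA.2)))
        (ct_swap2 hB (ct_swap1 hB (hcol w a b hwA.1 haA hbA hwa hwb hab hwA.2)))
        (ct_swap2 hB (ct_swap1 hB (hcol u a c huA.1 haA hcA hua huc hac huA.2)))
        (ct_swap2 hB (ct_swap1 hB (hcol v a c hvA.1 haA hcA hva hvc hac hvA.2)))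
        (ct_swap2 hB (ct_swap1 hB (hcol w a c hwA.1 haA hcA hwa hwc hac hwA.2)))
        (ct_swap1 hB (hcol u a v huA.1 haA hvA.1 hua huv hva.symm huA.2))
        (ct_swap1 hB (hcol u a w huA.1 haA hwA.1 hua huw hwa.symm huA.2))
        (ct_swap1 hB (hcol v a w hvA.1 haA hwA.1 hva hvw hwa.symm hvA.2))
        (ct_swap2 hB (ct_swap1 hB (hcol u b c huA.1 hbA hcA hub huc hbc huA.2)))
        (ct_swap2 hB (ct_swap1 hB (hcol v b c hvA.1 hbA hcA hvb hvc hbc hvA.2)))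
        (ct_swap2 hB (ct_swap1 hB (hcol w b c hwA.1 hbA hcA hwb hwc hbc hwA.2)))
        (ct_swap1 hB (hcol u b v huA.1 hbA hvA.1 hub huv hvb.symm huA.2))
        (ct_swap1 hB (hcol u b w huA.1 hbA hwA.1 hub huw hwb.symm huA.2))
        (ct_swap1 hB (hcol v b w hvA.1 hbA hwA.1 hvb hvw hwb.symm hvA.2))
        (ct_swap1 hB (hcol u c v huA.1 hcA hvA.1 huc huv hvc.symm huA.2))
        (ct_swap1 hB (hcol u c w huA.1 hcA hwA.1 huc huw hwc.symm huA.2))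
        (ct_swap1 hB (hcol v c w hvA.1 hcA hwA.1 hvc hvw hwc.symm hvA.2))
        (hcol u v w huA.1 hvA.1 hwA.1 huv huw hvw huA.2)

end Main


/-- in a betweenness structure of order `n` and co-size `m`, with
`c = n - m`, every point `x` satisfies `d_B(x) = n - c (= m)` or `d_B(x) ≤ 5 - c
(= m - n + 5)`. -/
theorem stmt18 {X : Type} [Fintype X] {n : ℕ} (hcard : Fintype.card X = n)
    (btw : X → X → X → Prop) (hB : IsBtw btw) :
    ∀ x : X, degB btw x = coSize btw ∨
      (degB btw x : ℤ) ≤ (coSize btw : ℤ) - (n : ℤ) + 5 := by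
  classical
  intro x
  set 𝒯 : Finset (Finset X) := Finset.univ.filter (fun T => IsTriangle btw T) with h𝒯
  have hco : coSize btw = 𝒯.card := by
    rw [coSize]
    have : {T : Finset X | IsTriangle btw T} = ↑𝒯 := by
      ext T; simp [h𝒯]
    rw [this, Set.ncard_coe_finset]
  have hdeg : degB btw x = (𝒯.filter (fun T => x ∈ T)).card := by
    rw [degB]
    have : {T : Finset X | IsTriangle btw T ∧ x ∈ T} = ↑(𝒯.filter (fun T => x ∈ T)) := by
      ext T; simp [h𝒯]
    rw [this, Set.ncard_coe_finset]
  by_cases hall : ∀ T ∈ 𝒯, x ∈ T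
  · left
    rw [hco, hdeg, Finset.filter_true_of_mem hall]
  · right
    push_neg at hall
    obtain ⟨T₀, hT₀mem, hxT₀⟩ := hall
    have hT₀tri : IsTriangle btw T₀ := by
      simp only [h𝒯, Finset.mem_filter] at hT₀mem; exact hT₀mem.2
    set A : Finset X := Finset.univ.erase x with hA
    have hT₀A : T₀ ⊆ A := Finset.subset_erase.mpr ⟨Finset.subset_univ _, hxT₀⟩
    have hL := lemL hB A ⟨T₀, hT₀A, hT₀tri⟩
    have hAcard : A.card = n - 1 := by
      rw [hA, Finset.card_erase_of_mem (Finset.mem_univ x), Finset.card_univ, hcard]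
    have hn1 : 1 ≤ n := by
      rw [← hcard]
      exact Fintype.card_pos_iff.mpr ⟨x⟩
    have hTSeq : A.powerset.filter (fun T => IsTriangle btw T) = 𝒯.filter (fun T => x ∉ T) := by
      ext T
      simp only [Finset.mem_filter, Finset.mem_powerset, h𝒯, Finset.mem_univ, true_and, hA,
        Finset.subset_erase]
      constructor
      · rintro ⟨⟨-, h2⟩, h3⟩; exact ⟨h3, h2⟩
      · rintro ⟨h1, h2⟩; exact ⟨⟨Finset.subset_univ _, h2⟩, h1⟩
    have hsplit : (𝒯.filter (fun T => x ∈ T)).card + (𝒯.filter (fun T => x ∉ T)).card = 𝒯.card :=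
      Finset.card_filter_add_card_filter_not (fun T => x ∈ T)
    rw [hTSeq] at hL
    rw [hco, hdeg]
    omega

end FMS
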